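/- arXiv:0706.0578 — 14 statements merged into one kernel-verified Lean document; each statement's English description precedes it below -/
import Mathlib

section
/- Let G be a finite simple graph with vertex set V = {1,…,n} and edge set E, and let k ≥ 1 be an integer. Then G is k-colorable (i.e., G admits a proper vertex coloring with k colors) if and only if there exists a point x ∈ ℂ^n satisfying: x_i^k − 1 = 0 for every vertex i ∈ V, and x_i^{k−1} + x_i^{k−2}·x_j + ⋯ + x_i·x_j^{k−2} + x_j^{k−1} = 0 (i.e., Σ_{t=0}^{k−1} x_i^{k−1−t}·x_j^t = 0) for every edge {i,j} ∈ E. -/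
/-- A finite simple graph `G` on vertices `{1,…,n}` (modeled as `Fin n`)
is `k`-colorable (for `k ≥ 1`) if and only if the polynomial system
`x_i^k - 1 = 0` (for every vertex `i`) and
`∑_{t=0}^{k-1} x_i^{k-1-t} x_j^t = 0` (for every edge `{i,j}`)
has a solution `x ∈ ℂ^n`. -/
theorem colorable_iff_polynomial_system (n k : ℕ) (hk : 1 ≤ k) (G : SimpleGraph (Fin n)) :
    G.Colorable k ↔
      ∃ x : Fin n → ℂ,
        (∀ i : Fin n, x i ^ k - 1 = 0) ∧
        (∀ i j : Fin n, G.Adj i j →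
          ∑ t ∈ Finset.range k, x i ^ (k - 1 - t) * x j ^ t = 0) := by
  have hk0 : k ≠ 0 := Nat.one_le_iff_ne_zero.mp hk
  haveI : NeZero k := ⟨hk0⟩
  obtain ⟨ζ, hζ⟩ : ∃ ζ : ℂ, IsPrimitiveRoot ζ k :=
    ⟨_, Complex.isPrimitiveRoot_exp k hk0⟩
  constructor
  · rintro ⟨C⟩
    refine ⟨fun i => ζ ^ (C i : ℕ), fun i => ?_, fun i j hadj => ?_⟩
    · rw [← pow_mul, mul_comm, pow_mul, hζ.pow_eq_one, one_pow, sub_self]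
    · have hne : ζ ^ (C j : ℕ) - ζ ^ (C i : ℕ) ≠ 0 := by
        rw [sub_ne_zero]
        intro h
        exact C.valid hadj (Fin.ext (hζ.pow_inj (C i).isLt (C j).isLt h.symm))
      have key := geom_sum₂_mul (ζ ^ (C j : ℕ)) (ζ ^ (C i : ℕ)) k
      rw [← pow_mul, mul_comm (C j : ℕ) k, pow_mul, hζ.pow_eq_one, one_pow,
        ← pow_mul, mul_comm (C i : ℕ) k, pow_mul, hζ.pow_eq_one, one_pow, sub_self] at key
      have hsum : (∑ t ∈ Finset.range k,
          (ζ ^ (C j : ℕ)) ^ t * (ζ ^ (C i : ℕ)) ^ (k - 1 - t)) = 0 :=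
        (mul_eq_zero.mp key).resolve_right hne
      calc ∑ t ∈ Finset.range k, (ζ ^ (C i : ℕ)) ^ (k - 1 - t) * (ζ ^ (C j : ℕ)) ^ t
          = ∑ t ∈ Finset.range k, (ζ ^ (C j : ℕ)) ^ t * (ζ ^ (C i : ℕ)) ^ (k - 1 - t) := by
            exact Finset.sum_congr rfl fun t _ => mul_comm _ _
        _ = 0 := hsum
  · rintro ⟨x, hroot, hedge⟩
    have hx1 : ∀ i, x i ^ k = 1 := fun i => sub_eq_zero.mp (hroot i)
    have hex : ∀ i : Fin n, ∃ t : Fin k, ζ ^ (t : ℕ) = x i := by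
      intro i
      obtain ⟨t, htk, ht⟩ := hζ.eq_pow_of_pow_eq_one (hx1 i)
      exact ⟨⟨t, htk⟩, ht⟩
    choose c hc using hex
    refine ⟨SimpleGraph.Coloring.mk c fun {i j} hadj hcij => ?_⟩
    have hxij : x i = x j := by rw [← hc i, ← hc j, hcij]
    have h0 := hedge i j hadj
    have hxne : x i ≠ 0 := by
      intro h
      have h1 := hx1 i
      rw [h, zero_pow hk0] at h1
      exact one_ne_zero h1.symm
    rw [← hxij] at h0
    have : ∑ t ∈ Finset.range k, x i ^ (k - 1 - t) * x i ^ t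
        = (k : ℂ) * x i ^ (k - 1) := by
      rw [Finset.sum_congr rfl fun t ht => ?_, Finset.sum_const, Finset.card_range,
        nsmul_eq_mul]
      rw [← pow_add, Nat.sub_add_cancel (Nat.le_sub_one_of_lt (Finset.mem_range.mp ht))]
    rw [this] at h0
    rcases mul_eq_zero.mp h0 with h | h
    · exact hk0 (by exact_mod_cast h)
    · exact pow_ne_zero _ hxne h
end

section
/- Let G be a finite simple graph with vertex set V = {1,…,n} and edge set E, and let k be a natural number. Then G has a stable (independent) set of size at least k if and only if there exists a point x ∈ ℂ^n satisfying: x_i² − x_i = 0 for every vertex i ∈ V, x_i·x_j = 0 for every edge {i,j} ∈ E, and Σ_{i=1}^n x_i = k. -/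
/-- A finite simple graph `G` on `Fin n` has a stable (independent) set of
size at least `k` if and only if the polynomial system
`x_i² - x_i = 0` (for every vertex), `x_i x_j = 0` (for every edge), and `∑ x_i = k`
has a solution `x ∈ ℂ^n`. -/
theorem stableSet_iff_polynomial_system (n k : ℕ) (G : SimpleGraph (Fin n)) :
    (∃ S : Finset (Fin n), (∀ i ∈ S, ∀ j ∈ S, ¬ G.Adj i j) ∧ k ≤ S.card) ↔
      ∃ x : Fin n → ℂ,
        (∀ i : Fin n, x i ^ 2 - x i = 0) ∧
        (∀ i j : Fin n, G.Adj i j → x i * x j = 0) ∧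
        (∑ i : Fin n, x i = (k : ℂ)) := by
  constructor
  · rintro ⟨S, hstab, hk⟩
    obtain ⟨T, hTS, hTcard⟩ := Finset.exists_subset_card_eq hk
    refine ⟨fun i => if i ∈ T then 1 else 0, ?_, ?_, ?_⟩
    · intro i; by_cases h : i ∈ T <;> simp [h]
    · intro i j hij
      by_cases hi : i ∈ T
      · by_cases hj : j ∈ T
        · exact absurd hij (hstab i (hTS hi) j (hTS hj))
        · simp [hj]
      · simp [hi]
    · rw [Finset.sum_ite_mem, Finset.univ_inter, Finset.sum_const, hTcard]
      simp
  · rintro ⟨x, hsq, hadj, hsum⟩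
    have hx : ∀ i, x i = 0 ∨ x i = 1 := by
      intro i
      have := hsq i
      have : x i * (x i - 1) = 0 := by ring_nf; linear_combination this
      rcases mul_eq_zero.mp this with h | h
      · exact Or.inl h
      · exact Or.inr (by linear_combination h)
    refine ⟨Finset.univ.filter (fun i => x i = 1), ?_, ?_⟩
    · intro i hi j hj hij
      simp only [Finset.mem_filter] at hi hj
      have := hadj i j hij
      rw [hi.2, hj.2] at this
      norm_num at this
    · have : ∑ i : Fin n, x i = ((Finset.univ.filter (fun i => x i = 1)).card : ℂ) := by
        rw [Finset.sum_filter_add_sum_filter_not Finset.univ (fun i => x i = 1) x |>.symm]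
        have h1 : ∑ i ∈ Finset.univ.filter (fun i => x i = 1), x i
            = ((Finset.univ.filter (fun i => x i = 1)).card : ℂ) := by
          rw [Finset.sum_congr rfl (fun i hi => (Finset.mem_filter.mp hi).2)]
          simp
        have h2 : ∑ i ∈ Finset.univ.filter (fun i => ¬ x i = 1), x i = 0 := by
          apply Finset.sum_eq_zero
          intro i hi
          rcases hx i with h | h
          · exact h
          · exact absurd h (Finset.mem_filter.mp hi).2
        rw [h1, h2, add_zero]
      rw [this] at hsum
      exact le_of_eq (Nat.cast_injective hsum).symm
end

section
/- Let G be a finite simple graph with vertex set {1,…,n} and let L be an integer with 3 ≤ L ≤ n. Then G has a cycle of length L if and only if there exist points x, y ∈ ℂ^n satisfying: Σ_{i=1}^n y_i = L; for every vertex i, y_i·(y_i − 1) = 0 and ∏_{s=1}^n (x_i − s) = 0; and for every vertex i, y_i · ∏_{j ∈ Adj(i)} (x_i − y_j·x_j + y_j)·(x_i − y_j·x_j − y_j·(L−1)) = 0, where Adj(i) denotes the set of vertices adjacent to i in G. -/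
/-!
A cycle `v₀, …, v_{L-1}` gives the solution `y = 𝟙_{cycle}`, `x (v_t) = t + 1`.
Conversely, `y` is the indicator of a set `S` of `L` vertices, `x` labels every vertex by a
natural number, and the last equation says that every vertex of `S` has a neighbour in `S` whose
label is one larger, or `L - 1` smaller: modulo `L`, one larger in both cases. Repeatedly passing
to such a neighbour from a fixed vertex of `S` reaches every residue mod `L`, so the labels mod `L`
biject `S` onto `ℤ/L`, and consecutive residues are adjacent: a copy of the `L`-cycle graph.
-/

open SimpleGraph Finset

namespace SimpleGraph

variable {V : Type*} {G : SimpleGraph V}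

theorem cycleGraph_isContained_iff_exists_injective_adj_succ {L : ℕ} [NeZero L] (hL : 2 ≤ L) :
    cycleGraph L ⊑ G ↔ ∃ φ : Fin L → V, Function.Injective φ ∧ ∀ k, G.Adj (φ k) (φ (k + 1)) := by
  have h_val_eq_one (d : Fin L) : d.val = 1 ↔ d = 1 := by
    rw [Fin.ext_iff, Fin.val_one', Nat.one_mod_eq_one.mpr (by omega)]
  have h_adj (a b : Fin L) : (cycleGraph L).Adj a b ↔ a = b + 1 ∨ b = a + 1 := by
    rw [cycleGraph_adj', h_val_eq_one, h_val_eq_one, sub_eq_iff_eq_add', sub_eq_iff_eq_add']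
  constructor
  · rintro ⟨f⟩
    exact ⟨f, f.injective, fun k => f.toHom.map_adj ((h_adj _ _).mpr (Or.inr rfl))⟩
  · rintro ⟨φ, hφ, hadj⟩
    refine ⟨⟨⟨φ, fun {a b} hab => ?_⟩, hφ⟩⟩
    rcases (h_adj a b).mp hab with rfl | rfl
    exacts [(hadj b).symm, hadj a]

open Fin.NatCast in
theorem exists_injective_adj_succ_of_labelling {L : ℕ} [NeZero L] (S : Finset V) (hS : #S = L)
    (c : V → Fin L) (hc : ∀ i ∈ S, ∃ j ∈ S, G.Adj i j ∧ c j = c i + 1) :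
    ∃ φ : Fin L → V, Function.Injective φ ∧ ∀ k, G.Adj (φ k) (φ (k + 1)) := by
  classical
  obtain ⟨u, hu⟩ : S.Nonempty := card_pos.mp (hS ▸ Nat.pos_of_neZero L)
  have h_reach (m : ℕ) : ∃ i ∈ S, c i = c u + m := by
    induction m with
    | zero => exact ⟨u, hu, by simp⟩
    | succ m ih =>
      obtain ⟨i, hi, hci⟩ := ih
      obtain ⟨j, hj, -, hcj⟩ := hc i hi
      exact ⟨j, hj, by rw [hcj, hci, Nat.cast_succ, add_assoc]⟩
  have h_surj (k : Fin L) : ∃ i ∈ S, c i = k := by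
    simpa using h_reach (k - c u).val
  have h_inj : Set.InjOn c S := by
    have h_image : S.image c = univ := eq_univ_of_forall fun k => mem_image.mpr (h_surj k)
    rw [← card_image_iff, h_image, card_univ, Fintype.card_fin, hS]
  choose φ hφS hcφ using h_surj
  refine ⟨φ, fun a b hab => by rw [← hcφ a, ← hcφ b, hab], fun k => ?_⟩
  obtain ⟨j, hj, hadj, hcj⟩ := hc (φ k) (hφS k)
  rwa [h_inj hj (hφS (k + 1)) (by rw [hcj, hcφ, hcφ])] at hadj

end SimpleGraph

section CycleSystem

variable {K : Type*} [CommRing K] {n : ℕ}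

def SolvesCycleSystem (G : SimpleGraph (Fin n)) [DecidableRel G.Adj] (L : ℕ) (x y : Fin n → K) :
    Prop :=
  (∑ i : Fin n, y i = (L : K)) ∧
  (∀ i : Fin n, y i * (y i - 1) = 0) ∧
  (∀ i : Fin n, ∏ s ∈ Finset.Icc 1 n, (x i - (s : K)) = 0) ∧
  (∀ i : Fin n, y i * ∏ j ∈ G.neighborFinset i,
      ((x i - y j * x j + y j) * (x i - y j * x j - y j * ((L : K) - 1))) = 0)

variable {G : SimpleGraph (Fin n)} [DecidableRel G.Adj] {L : ℕ}

theorem exists_solvesCycleSystem_of_injective_adj_succ [NeZero L] {φ : Fin L → Fin n}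
    (hφ : Function.Injective φ) (hadj : ∀ k, G.Adj (φ k) (φ (k + 1))) :
    ∃ x y : Fin n → K, SolvesCycleSystem G L x y := by
  classical
  have hLn : L ≤ n := by simpa using Fintype.card_le_of_injective φ hφ
  set pos := Function.invFun φ
  have hpos (k : Fin L) : pos (φ k) = k := Function.leftInverse_invFun hφ k
  refine ⟨fun i => (pos i : ℕ) + 1, fun i => if i ∈ Set.range φ then 1 else 0, ?_, ?_, ?_, ?_⟩
  · simp [sum_boole, card_image_of_injective _ hφ]
  · intro i
    dsimp only
    split_ifs <;> simp
  · intro i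
    refine prod_eq_zero (i := (pos i : ℕ) + 1) (mem_Icc.mpr ⟨by omega, by omega⟩) ?_
    push_cast
    ring
  · intro i
    dsimp only
    split_ifs with hi
    swap
    · simp
    obtain ⟨k, rfl⟩ := hi
    refine mul_eq_zero_of_right _ (prod_eq_zero ((G.mem_neighborFinset _ _).mpr (hadj k)) ?_)
    rw [if_pos ⟨k + 1, rfl⟩, hpos, hpos]
    rcases Nat.lt_or_eq_of_le k.isLt with hk | hk
    · rw [Fin.val_add_one_of_lt' hk]
      push_cast
      ring
    · have h_wrap : (k + 1).val = 0 := by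
        rw [Fin.val_add, Fin.val_one', Nat.add_mod_mod, show k.val + 1 = L from hk, Nat.mod_self]
      have hkL : (k : K) + 1 = L := by rw [← Nat.cast_succ, hk]
      rw [h_wrap]
      linear_combination ((k : K) + 1) * hkL

open Fin.NatCast in
theorem SolvesCycleSystem.exists_labelling [IsDomain K] [CharZero K] [NeZero L] {x y : Fin n → K}
    (h : SolvesCycleSystem G L x y) :
    ∃ S : Finset (Fin n), #S = L ∧ ∃ c : Fin n → Fin L,
      ∀ i ∈ S, ∃ j ∈ S, G.Adj i j ∧ c j = c i + 1 := by
  classical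
  obtain ⟨h_sum, h_idem, h_label, h_succ⟩ := h
  have hy (i : Fin n) : y i = 0 ∨ y i = 1 := by
    simpa [sub_eq_zero] using h_idem i
  have hx (i : Fin n) : ∃ s : ℕ, 1 ≤ s ∧ x i = s := by
    obtain ⟨s, hs, hxs⟩ := prod_eq_zero_iff.mp (h_label i)
    exact ⟨s, (mem_Icc.mp hs).1, sub_eq_zero.mp hxs⟩
  choose ξ hξ1 hξ using hx
  refine ⟨univ.filter (y · = 1), ?_, fun i => ξ i, fun i hi => ?_⟩
  · have h_sum_eq_card : ∑ i, y i = (#(univ.filter (y · = 1)) : K) := by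
      rw [← sum_boole]
      exact sum_congr rfl fun i _ => by rcases hy i with h | h <;> simp [h]
    exact_mod_cast h_sum_eq_card.symm.trans h_sum
  · have hyi : y i = 1 := (mem_filter.mp hi).2
    obtain ⟨j, hj, hfactor⟩ := prod_eq_zero_iff.mp (by simpa [hyi] using h_succ i)
    rcases hy j with hyj | hyj
    · have hxi : x i ≠ 0 := by rw [hξ]; exact_mod_cast Nat.one_le_iff_ne_zero.mp (hξ1 i)
      simp [hyj, hxi] at hfactor
    refine ⟨j, mem_filter.mpr ⟨mem_univ j, hyj⟩, (G.mem_neighborFinset i j).mp hj, ?_⟩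
    rw [hyj, hξ, hξ] at hfactor
    have h_step : ξ j = ξ i + 1 ∨ ξ i + 1 = ξ j + L := by
      rcases mul_eq_zero.mp hfactor with h | h
      · exact Or.inl (by exact_mod_cast (by linear_combination -h : (ξ j : K) = ξ i + 1))
      · exact Or.inr (by exact_mod_cast (by linear_combination h : (ξ i : K) + 1 = ξ j + L))
    show ((ξ j : ℕ) : Fin L) = (ξ i : Fin L) + 1
    rcases h_step with h | h
    · rw [h, Nat.cast_add_one]
    · rw [← Nat.cast_add_one, h, Nat.cast_add, Fin.natCast_self, add_zero]

end CycleSystem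

theorem cycle_iff_polynomial_system_general (n L : ℕ) (hL3 : 3 ≤ L)
    (G : SimpleGraph (Fin n)) [DecidableRel G.Adj] :
    (∃ (v : Fin n) (w : G.Walk v v), w.IsCycle ∧ w.length = L) ↔
      ∃ x y : Fin n → ℂ,
        (∑ i : Fin n, y i = (L : ℂ)) ∧
        (∀ i : Fin n, y i * (y i - 1) = 0) ∧
        (∀ i : Fin n, ∏ s ∈ Finset.Icc 1 n, (x i - (s : ℂ)) = 0) ∧
        (∀ i : Fin n, y i * ∏ j ∈ G.neighborFinset i,
            ((x i - y j * x j + y j) * (x i - y j * x j - y j * ((L : ℂ) - 1))) = 0) := by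
  have : NeZero L := ⟨by omega⟩
  rw [← cycleGraph_isContained_iff hL3,
    cycleGraph_isContained_iff_exists_injective_adj_succ (by omega)]
  constructor
  · rintro ⟨φ, hφ, hadj⟩
    exact exists_solvesCycleSystem_of_injective_adj_succ hφ hadj
  · rintro ⟨x, y, hxy⟩
    obtain ⟨S, hS, c, hc⟩ := SolvesCycleSystem.exists_labelling hxy
    exact exists_injective_adj_succ_of_labelling S hS c hc

/-- A finite simple graph `G` on `Fin n` has a cycle of length `L`
(with `3 ≤ L ≤ n`) if and only if the polynomial system
`∑ y_i = L`; `y_i (y_i - 1) = 0` and `∏_{s=1}^n (x_i - s) = 0` for every vertex `i`; and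
`y_i ∏_{j ∈ Adj(i)} (x_i - y_j x_j + y_j)(x_i - y_j x_j - y_j (L-1)) = 0` for every vertex `i`,
has a solution `x, y ∈ ℂ^n`. -/
theorem cycle_iff_polynomial_system (n L : ℕ) (hL3 : 3 ≤ L) (hLn : L ≤ n)
    (G : SimpleGraph (Fin n)) [DecidableRel G.Adj] :
    (∃ (v : Fin n) (w : G.Walk v v), w.IsCycle ∧ w.length = L) ↔
      ∃ x y : Fin n → ℂ,
        (∑ i : Fin n, y i = (L : ℂ)) ∧
        (∀ i : Fin n, y i * (y i - 1) = 0) ∧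
        (∀ i : Fin n, ∏ s ∈ Finset.Icc 1 n, (x i - (s : ℂ)) = 0) ∧
        (∀ i : Fin n, y i * ∏ j ∈ G.neighborFinset i,
            ((x i - y j * x j + y j) * (x i - y j * x j - y j * ((L : ℂ) - 1))) = 0) :=
  cycle_iff_polynomial_system_general n L hL3 G
end

section
/- Let G be a finite simple graph with vertex set {1,…,n}, n ≥ 3. Then G has a Hamiltonian cycle if and only if there exists a point x ∈ ℂ^n satisfying, for every vertex i: ∏_{s=1}^n (x_i − s) = 0 and ∏_{j ∈ Adj(i)} (x_i − x_j + 1)·(x_i − x_j − (n−1)) = 0, where Adj(i) denotes the set of vertices adjacent to i in G. -/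
/-!
A Hamiltonian cycle on `n ≥ 3` vertices is the same as a copy of the cycle graph `C_n`, i.e. a
bijective labelling `y` of the vertices by `Fin n` in which every vertex has a neighbour carrying
the next label mod `n`. Put `x_i = y_i + 1`: the first equation says `x_i ∈ {1, …, n}`, and a
factor of the second vanishes at `j` iff `x_j = x_i + 1` or `(x_i, x_j) = (n, 1)`, i.e. iff
`y_j = y_i + 1` in `Fin n`. Bijectivity comes for free, since a nonempty set of labels closed
under `+ 1` is all of `Fin n`.
-/

open Finset SimpleGraph

namespace Fin

variable {n : ℕ} [NeZero n]

theorem eq_add_one_iff_val {k l : Fin n} :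
    l = k + 1 ↔ (l : ℕ) = k + 1 ∨ (k : ℕ) = n - 1 ∧ (l : ℕ) = 0 := by
  rw [Fin.ext_iff, Fin.val_add, Fin.val_one', Nat.add_mod_mod]
  rcases Nat.lt_or_ge ((k : ℕ) + 1) n with h | h
  · rw [Nat.mod_eq_of_lt h]
    omega
  · rw [show (k : ℕ) + 1 = n by omega, Nat.mod_self]
    omega

open Fin.NatCast in
theorem surjective_of_forall_exists_eq_add_one {α : Type*} [Nonempty α] {y : α → Fin n}
    (h : ∀ a, ∃ b, y b = y a + 1) : Function.Surjective y := by
  obtain ⟨a₀⟩ := ‹Nonempty α›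
  have reach : ∀ m : ℕ, ∃ b, y b = y a₀ + m := by
    intro m
    induction m with
    | zero => exact ⟨a₀, by simp⟩
    | succ m ih =>
      obtain ⟨b, hb⟩ := ih
      obtain ⟨c, hc⟩ := h b
      exact ⟨c, by rw [hc, hb, Nat.cast_succ, add_assoc]⟩
  intro k
  obtain ⟨b, hb⟩ := reach (k - y a₀).val
  exact ⟨b, by rw [hb, Fin.cast_val_eq_self, add_sub_cancel]⟩

theorem natCast_sub_add_one_mul_eq_zero_iff {R : Type*} [CommRing R] [IsDomain R] [CharZero R]
    {k l : Fin n} :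
    (((k : ℕ) : R) - l + 1) * (((k : ℕ) : R) - l - ((n : R) - 1)) = 0 ↔ l = k + 1 := by
  have hn : 1 ≤ n := Nat.one_le_iff_ne_zero.2 (NeZero.ne n)
  rw [mul_eq_zero, eq_add_one_iff_val, sub_add_eq_add_sub, sub_eq_zero, sub_sub, sub_eq_zero,
    ← Nat.cast_one (R := R), ← Nat.cast_sub hn]
  have := l.isLt
  exact_mod_cast (by omega : (k : ℕ) + 1 = l ∨ (k : ℕ) = l + (n - 1) ↔
    (l : ℕ) = k + 1 ∨ (k : ℕ) = n - 1 ∧ (l : ℕ) = 0)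

end Fin

theorem Finset.prod_Icc_sub_natCast_eq_zero_iff {R : Type*} [CommRing R] [IsDomain R] {n : ℕ}
    {z : R} :
    ∏ s ∈ Icc 1 n, (z - s) = 0 ↔ ∃ k : Fin n, z = (k : ℕ) + 1 := by
  rw [prod_eq_zero_iff]
  constructor
  · rintro ⟨s, hs, hz⟩
    obtain ⟨hs1, hsn⟩ := mem_Icc.1 hs
    refine ⟨⟨s - 1, by omega⟩, ?_⟩
    rw [sub_eq_zero.1 hz, Nat.cast_sub hs1, Nat.cast_one, sub_add_cancel]
  · rintro ⟨k, rfl⟩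
    exact ⟨k + 1, mem_Icc.2 ⟨by omega, k.isLt⟩, by push_cast; ring⟩

namespace SimpleGraph

variable {V : Type*} [Fintype V] {G : SimpleGraph V} {n : ℕ}

theorem exists_isHamiltonianCycle_iff_cycleGraph_isContained [DecidableEq V]
    (hV : Fintype.card V = n) (hn : 3 ≤ n) :
    (∃ (v : V) (p : G.Walk v v), p.IsHamiltonianCycle) ↔ cycleGraph n ⊑ G := by
  simp only [cycleGraph_isContained_iff hn, Walk.isHamiltonianCycle_iff_isCycle_and_length_eq, hV]

theorem cycleGraph_adj_iff_eq_add_one [NeZero n] (hn : 2 ≤ n) {u v : Fin n} :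
    (cycleGraph n).Adj u v ↔ u = v + 1 ∨ v = u + 1 := by
  obtain ⟨m, rfl⟩ : ∃ m, n = m + 2 := ⟨n - 2, by omega⟩
  rw [cycleGraph_adj, sub_eq_iff_eq_add', sub_eq_iff_eq_add']

theorem cycleGraph_isContained_iff_exists_succ_labelling [NeZero n] (hV : Fintype.card V = n)
    (hn : 2 ≤ n) :
    cycleGraph n ⊑ G ↔ ∃ y : V → Fin n, ∀ i, ∃ j, G.Adj i j ∧ y j = y i + 1 := by
  constructor
  · rintro ⟨c⟩
    have hc : Function.Bijective c := (Fintype.bijective_iff_injective_and_card c).2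
      ⟨c.injective, by rw [Fintype.card_fin, hV]⟩
    let e := Equiv.ofBijective c hc
    refine ⟨e.symm, fun i => ⟨e (e.symm i + 1), ?_, e.symm_apply_apply _⟩⟩
    have hadj : G.Adj (e (e.symm i)) (e (e.symm i + 1)) :=
      c.toHom.map_adj ((cycleGraph_adj_iff_eq_add_one hn).2 (Or.inr rfl))
    rwa [e.apply_symm_apply] at hadj
  · rintro ⟨y, hy⟩
    have : Nonempty V := Fintype.card_pos_iff.1 (by omega)
    have hsurj := Fin.surjective_of_forall_exists_eq_add_one fun i => (hy i).imp fun _ => And.right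
    have hbij : Function.Bijective y := (Fintype.bijective_iff_surjective_and_card y).2
      ⟨hsurj, by rw [Fintype.card_fin, hV]⟩
    let e := Equiv.ofBijective y hbij
    have step : ∀ k, G.Adj (e.symm k) (e.symm (k + 1)) := by
      intro k
      obtain ⟨j, hadj, hj⟩ := hy (e.symm k)
      have hk : y (e.symm k) = k := e.apply_symm_apply k
      have hj' : j = e.symm (k + 1) := e.eq_symm_apply.2 (hj.trans (by rw [hk]))
      rwa [← hj']
    refine ⟨⟨⟨e.symm, fun {u v} huv => ?_⟩, e.symm.injective⟩⟩
    rcases (cycleGraph_adj_iff_eq_add_one hn).1 huv with rfl | rfl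
    · exact (step v).symm
    · exact step u

end SimpleGraph

/-- A finite simple graph `G` on `Fin n` (with `n ≥ 3`) has a Hamiltonian
cycle if and only if the polynomial system, for every vertex `i`,
`∏_{s=1}^n (x_i - s) = 0` and `∏_{j ∈ Adj(i)} (x_i - x_j + 1)(x_i - x_j - (n-1)) = 0`,
has a solution `x ∈ ℂ^n`. -/
theorem hamiltonianCycle_iff_polynomial_system (n : ℕ) (hn : 3 ≤ n)
    (G : SimpleGraph (Fin n)) [DecidableRel G.Adj] :
    (∃ (v : Fin n) (w : G.Walk v v), w.IsHamiltonianCycle) ↔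
      ∃ x : Fin n → ℂ,
        ∀ i : Fin n,
          (∏ s ∈ Finset.Icc 1 n, (x i - (s : ℂ)) = 0) ∧
          (∏ j ∈ G.neighborFinset i,
            ((x i - x j + 1) * (x i - x j - ((n : ℂ) - 1))) = 0) := by
  have : NeZero n := ⟨by omega⟩
  rw [exists_isHamiltonianCycle_iff_cycleGraph_isContained (Fintype.card_fin n) hn,
    cycleGraph_isContained_iff_exists_succ_labelling (Fintype.card_fin n) (by omega)]
  constructor
  · rintro ⟨y, hy⟩
    refine ⟨fun i => (y i : ℕ) + 1, fun i => ⟨prod_Icc_sub_natCast_eq_zero_iff.2 ⟨y i, rfl⟩, ?_⟩⟩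
    obtain ⟨j, hadj, hj⟩ := hy i
    refine prod_eq_zero ((G.mem_neighborFinset i j).2 hadj) ?_
    simpa only [add_sub_add_right_eq_sub] using Fin.natCast_sub_add_one_mul_eq_zero_iff.2 hj
  · rintro ⟨x, hx⟩
    choose y hy using fun i => prod_Icc_sub_natCast_eq_zero_iff.1 (hx i).1
    refine ⟨y, fun i => ?_⟩
    obtain ⟨j, hadj, hj⟩ := prod_eq_zero_iff.1 (hx i).2
    rw [hy i, hy j, add_sub_add_right_eq_sub] at hj
    exact ⟨j, (G.mem_neighborFinset i j).1 hadj, Fin.natCast_sub_add_one_mul_eq_zero_iff.1 hj⟩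
end

section
/- Let G be a finite simple graph with vertex set {1,…,n}, n ≥ 3. The set of solutions x ∈ ℂ^n of the system { ∏_{s=1}^n (x_i − s) = 0 and ∏_{j ∈ Adj(i)} (x_i − x_j + 1)·(x_i − x_j − (n−1)) = 0 for every vertex i } is finite, and its cardinality equals the number of pairs (v, W) where v is a vertex of G and W is a closed walk based at v that is a Hamiltonian cycle of G; equivalently, the number of solutions equals 2n times the number of Hamiltonian cycles of G (each Hamiltonian cycle giving n choices of starting vertex and 2 directions). -/
/-!
A solution gives every vertex a value in `{1, …, n}`, and the equation at `i` says that some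
neighbour `j` carries the cyclic successor value (`x j = x i + 1`, or `x j = 1` when `x i = n`).
Read in `ZMod n`, the values of the successors of any vertex run through every residue, so
the labelling is a bijection `ZMod n ≃ V` along which consecutive vertices are adjacent.
Such bijections `σ` are exactly the Hamiltonian cycles with a chosen base point `σ 0` and
direction: `σ k` is the `k`-th vertex of the cycle.
-/

namespace SimpleGraph

variable {V : Type*} {G : SimpleGraph V}

namespace Walk

def ofSeq (f : ℕ → V) (hf : ∀ k, G.Adj (f k) (f (k + 1))) : (m : ℕ) → G.Walk (f 0) (f m)
  | 0 => nil
  | m + 1 => cons (hf 0) (ofSeq (fun k => f (k + 1)) (fun k => hf (k + 1)) m)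

@[simp]
lemma length_ofSeq (f : ℕ → V) (hf : ∀ k, G.Adj (f k) (f (k + 1))) (m : ℕ) :
    (ofSeq f hf m).length = m := by
  induction m generalizing f with
  | zero => rfl
  | succ m ih => simp [ofSeq, ih]

lemma getVert_ofSeq (f : ℕ → V) (hf : ∀ k, G.Adj (f k) (f (k + 1))) {m i : ℕ} (hi : i ≤ m) :
    (ofSeq f hf m).getVert i = f i := by
  induction m generalizing f i with
  | zero => simp [ofSeq, Nat.le_zero.1 hi]
  | succ m ih =>
    cases i with
    | zero => simp
    | succ i => simp [ofSeq, ih _ _ (Nat.le_of_succ_le_succ hi)]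

lemma getVert_val_natCast {n : ℕ} {u : V} {p : G.Walk u u} (hp : p.length = n) {m : ℕ}
    (hm : m ≤ n) : p.getVert (m : ZMod n).val = p.getVert m := by
  rcases hm.lt_or_eq with hm | rfl
  · rw [ZMod.val_natCast_of_lt hm]
  · rw [ZMod.natCast_self, ZMod.val_zero, getVert_zero, ← hp, getVert_length]

lemma sigma_mk_eq_of_copy_eq {u v : V} (h : u = v) {p : G.Walk u u} {q : G.Walk v v}
    (hpq : p.copy h h = q) : (⟨u, p⟩ : (w : V) × G.Walk w w) = ⟨v, q⟩ := by
  subst h hpq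
  rfl

end Walk

abbrev HamiltonianLabelling (G : SimpleGraph V) (n : ℕ) :=
  {σ : ZMod n ≃ V // ∀ k, G.Adj (σ k) (σ (k + 1))}

namespace HamiltonianLabelling

variable {n : ℕ}

def walk (σ : G.HamiltonianLabelling n) : G.Walk (σ.1 0) (σ.1 0) :=
  (Walk.ofSeq (fun k : ℕ => σ.1 k) (fun k => by simpa using σ.2 k) n).copy
    (by simp) (by simp)

lemma length_walk (σ : G.HamiltonianLabelling n) : σ.walk.length = n := by
  simp [walk]

lemma getVert_walk (σ : G.HamiltonianLabelling n) {k : ℕ} (hk : k ≤ n) :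
    σ.walk.getVert k = σ.1 k := by
  simp [walk, Walk.getVert_ofSeq _ _ hk]

lemma isHamiltonianCycle_walk [Fintype V] [DecidableEq V] [NeZero n] (hn : 3 ≤ n)
    (σ : G.HamiltonianLabelling n) : σ.walk.IsHamiltonianCycle := by
  have hV : Fintype.card V = n := by rw [← Fintype.card_congr σ.1, ZMod.card]
  rw [Walk.isHamiltonianCycle_iff_isCycle_and_length_eq, length_walk, hV,
    Walk.isCycle_iff_isPath_tail_and_le_length, length_walk, ← Walk.IsPath.getVert_injOn_iff]
  refine ⟨⟨fun i hi j hj hij => ?_, hn⟩, rfl⟩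
  have hlen : σ.walk.tail.length + 1 = n := by
    rw [Walk.length_tail_add_one (Walk.not_nil_iff_lt_length.2 (by rw [length_walk]; omega)),
      length_walk]
  simp only [Set.mem_ofPred_eq] at hi hj
  rw [Walk.getVert_tail, Walk.getVert_tail, getVert_walk _ (by omega), getVert_walk _ (by omega),
    σ.1.apply_eq_iff_eq] at hij
  push_cast at hij
  have := congrArg ZMod.val (add_right_cancel hij)
  rwa [ZMod.val_natCast_of_lt (by omega), ZMod.val_natCast_of_lt (by omega)] at this

variable [Fintype V] [DecidableEq V] [NeZero n]

noncomputable def ofIsHamiltonianCycle (hV : Fintype.card V = n) {v : V} {p : G.Walk v v}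
    (hp : p.IsHamiltonianCycle) : G.HamiltonianLabelling n := by
  have hlen : p.length = n := hV ▸ hp.length_eq
  refine ⟨Equiv.ofBijective (fun k : ZMod n => p.getVert k.val)
    ((Fintype.bijective_iff_injective_and_card _).2 ⟨fun k l hkl => ?_, by simp [hV]⟩),
    fun k => ?_⟩
  · exact ZMod.val_injective n <| hp.isCycle.getVert_injOn'
      (by have := k.val_lt; simp only [Set.mem_ofPred_eq]; omega)
      (by have := l.val_lt; simp only [Set.mem_ofPred_eq]; omega) hkl
  · have hk := k.val_lt
    simp only [Equiv.ofBijective_apply]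
    rw [show k + 1 = ((k.val + 1 : ℕ) : ZMod n) by simp, Walk.getVert_val_natCast hlen hk]
    exact p.adj_getVert_succ (by omega)

lemma ofIsHamiltonianCycle_apply (hV : Fintype.card V = n) {v : V} {p : G.Walk v v}
    (hp : p.IsHamiltonianCycle) (k : ZMod n) :
    (ofIsHamiltonianCycle hV hp).1 k = p.getVert k.val :=
  rfl

noncomputable def equivHamiltonianCycle (hV : Fintype.card V = n) (hn : 3 ≤ n) :
    G.HamiltonianLabelling n ≃ {p : (v : V) × G.Walk v v // p.2.IsHamiltonianCycle} where
  toFun σ := ⟨⟨_, σ.walk⟩, σ.isHamiltonianCycle_walk hn⟩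
  invFun p := ofIsHamiltonianCycle hV p.2
  left_inv σ := by
    refine Subtype.ext (Equiv.ext fun k => ?_)
    rw [ofIsHamiltonianCycle_apply, getVert_walk _ k.val_lt.le, ZMod.natCast_zmod_val]
  right_inv := by
    rintro ⟨⟨v, p⟩, hp⟩
    have hlen : p.length = n := hV ▸ hp.length_eq
    refine Subtype.ext (Walk.sigma_mk_eq_of_copy_eq (by simp [ofIsHamiltonianCycle_apply]) ?_)
    refine Walk.ext_getVert_le_length (by simp [length_walk, hlen]) fun k hk => ?_
    simp only [Walk.getVert_copy, Walk.length_copy, length_walk] at hk ⊢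
    rw [getVert_walk _ hk, ofIsHamiltonianCycle_apply, Walk.getVert_val_natCast hlen hk]

end HamiltonianLabelling
end SimpleGraph

namespace HamiltonianSystem

open SimpleGraph Function

variable {V : Type*} {n : ℕ}

def solutions [Fintype V] (G : SimpleGraph V) [DecidableRel G.Adj] (n : ℕ) : Set (V → ℂ) :=
  {x | ∀ i, (∏ s ∈ Finset.Icc 1 n, (x i - (s : ℂ)) = 0) ∧
      (∏ j ∈ G.neighborFinset i, ((x i - x j + 1) * (x i - x j - ((n : ℂ) - 1)))) = 0}

lemma prod_Icc_sub_eq_zero_iff [NeZero n] {z : ℂ} :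
    ∏ s ∈ Finset.Icc 1 n, (z - s) = 0 ↔ ∃ k : ZMod n, z = k.val + 1 := by
  simp only [Finset.prod_eq_zero_iff, Finset.mem_Icc, sub_eq_zero]
  constructor
  · rintro ⟨s, ⟨hs1, hsn⟩, rfl⟩
    refine ⟨(s - 1 : ℕ), ?_⟩
    rw [ZMod.val_natCast_of_lt (by omega), Nat.cast_sub hs1]
    ring
  · rintro ⟨k, rfl⟩
    exact ⟨k.val + 1, ⟨by omega, k.val_lt⟩, by push_cast; rfl⟩

lemma edge_factor_eq_zero_iff [NeZero n] (a b : ZMod n) :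
    ((a.val + 1 : ℂ) - (b.val + 1) + 1) * ((a.val + 1 : ℂ) - (b.val + 1) - (n - 1)) = 0 ↔
      b = a + 1 := by
  have hnat : ((a.val + 1 : ℂ) - (b.val + 1) + 1) * ((a.val + 1 : ℂ) - (b.val + 1) - (n - 1)) = 0
      ↔ a.val + 1 = b.val ∨ a.val + 1 = b.val + n := by
    rw [mul_eq_zero]
    refine or_congr ?_ ?_ <;> rw [← Nat.cast_inj (R := ℂ)] <;> push_cast <;>
      constructor <;> intro h <;> linear_combination h
  rw [hnat]
  constructor
  · rintro (h | h) <;> simpa using (congrArg (Nat.cast : ℕ → ZMod n) h).symm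
  · rintro rfl
    have hval : (a + 1).val = (a.val + 1) % n := by
      rw [← ZMod.val_natCast]; push_cast; simp
    rcases (show a.val + 1 ≤ n from a.val_lt).lt_or_eq with h | h
    · exact Or.inl (by rw [hval, Nat.mod_eq_of_lt h])
    · exact Or.inr (by rw [hval, h, Nat.mod_self, zero_add])

lemma bijective_of_forall_exists_eq_add_one [Fintype V] [NeZero n] (hV : Fintype.card V = n)
    {y : V → ZMod n} (hy : ∀ i, ∃ j, y j = y i + 1) : Bijective y := by
  have i₀ : V := (Fintype.card_pos_iff.1 (hV ▸ Nat.pos_of_neZero n)).some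
  have hreach : ∀ m : ℕ, ∃ j, y j = y i₀ + m := by
    intro m
    induction m with
    | zero => exact ⟨i₀, by simp⟩
    | succ m ih =>
      obtain ⟨j, hj⟩ := ih
      obtain ⟨j', hj'⟩ := hy j
      exact ⟨j', by rw [hj', hj]; push_cast; ring⟩
  refine (Fintype.bijective_iff_surjective_and_card y).2 ⟨fun t => ?_, by simp [hV]⟩
  obtain ⟨j, hj⟩ := hreach (t - y i₀).val
  exact ⟨j, by rw [hj, ZMod.natCast_zmod_val, add_sub_cancel]⟩

variable {G : SimpleGraph V}

def toSolution (σ : G.HamiltonianLabelling n) : V → ℂ :=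
  fun i => (σ.1.symm i).val + 1

lemma toSolution_injective [NeZero n] : Injective (toSolution (G := G) (n := n)) := by
  intro σ τ h
  refine Subtype.ext (Equiv.symm_bijective.injective (Equiv.ext fun i => ZMod.val_injective n ?_))
  simpa only [toSolution, add_left_inj, Nat.cast_inj] using congrFun h i

lemma solutions_eq_range [Fintype V] [DecidableRel G.Adj] [NeZero n] (hV : Fintype.card V = n) :
    solutions G n = Set.range (toSolution (G := G) (n := n)) := by
  ext x
  constructor
  · intro hx
    choose k hk using fun i => prod_Icc_sub_eq_zero_iff.1 (hx i).1
    have hsucc : ∀ i, ∃ j, G.Adj i j ∧ k j = k i + 1 := by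
      intro i
      obtain ⟨j, hj, h0⟩ := Finset.prod_eq_zero_iff.1 (hx i).2
      rw [hk i, hk j] at h0
      exact ⟨j, (mem_neighborFinset ..).1 hj, (edge_factor_eq_zero_iff _ _).1 h0⟩
    let e := Equiv.ofBijective k
      (bijective_of_forall_exists_eq_add_one hV fun i => (hsucc i).imp fun _ => And.right)
    refine ⟨⟨e.symm, fun m => ?_⟩, funext fun i => (hk i).symm⟩
    obtain ⟨j, hj, hkj⟩ := hsucc (e.symm m)
    have hkm : k (e.symm m) = m := e.apply_symm_apply m
    rwa [show e.symm (m + 1) = j from e.symm_apply_eq.2 (by rw [← hkm, ← hkj]; rfl)]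
  · rintro ⟨σ, rfl⟩ i
    refine ⟨prod_Icc_sub_eq_zero_iff.2 ⟨_, rfl⟩,
      Finset.prod_eq_zero_iff.2 ⟨σ.1 (σ.1.symm i + 1), ?_, ?_⟩⟩
    · simpa using σ.2 (σ.1.symm i)
    · simpa only [toSolution, Equiv.symm_apply_apply] using (edge_factor_eq_zero_iff _ _).2 rfl

end HamiltonianSystem

/-- For a finite simple graph `G` on `Fin n` (with `n ≥ 3`), the solution
set of the system `∏_{s=1}^n (x_i - s) = 0` and
`∏_{j ∈ Adj(i)} (x_i - x_j + 1)(x_i - x_j - (n-1)) = 0` (for every vertex `i`) is finite,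
and its cardinality equals the number of pairs `(v, W)` where `v` is a vertex and `W` is a
closed walk based at `v` that is a Hamiltonian cycle of `G`. -/
theorem hamiltonianCycle_count_solutions (n : ℕ) (hn : 3 ≤ n)
    (G : SimpleGraph (Fin n)) [DecidableRel G.Adj] :
    ({x : Fin n → ℂ |
        ∀ i : Fin n,
          (∏ s ∈ Finset.Icc 1 n, (x i - (s : ℂ)) = 0) ∧
          (∏ j ∈ G.neighborFinset i,
            ((x i - x j + 1) * (x i - x j - ((n : ℂ) - 1))) = 0)}).Finite ∧
    ({x : Fin n → ℂ |
        ∀ i : Fin n,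
          (∏ s ∈ Finset.Icc 1 n, (x i - (s : ℂ)) = 0) ∧
          (∏ j ∈ G.neighborFinset i,
            ((x i - x j + 1) * (x i - x j - ((n : ℂ) - 1))) = 0)}).ncard =
      Nat.card {p : (v : Fin n) × G.Walk v v // p.2.IsHamiltonianCycle} := by
  have : NeZero n := ⟨by omega⟩
  change (HamiltonianSystem.solutions G n).Finite ∧ (HamiltonianSystem.solutions G n).ncard = _
  rw [HamiltonianSystem.solutions_eq_range (Fintype.card_fin n)]
  refine ⟨Set.finite_range _, ?_⟩
  rw [Set.ncard_range_of_injective HamiltonianSystem.toSolution_injective,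
    Nat.card_congr (SimpleGraph.HamiltonianLabelling.equivHamiltonianCycle (Fintype.card_fin n) hn)]
end

section
/- Let G be a finite simple graph with vertex set V and edge set E, and let k ≥ 1 and R ≥ 0 be integers. Then G has a k-colorable subgraph with R edges (i.e., there exists F ⊆ E with |F| = R such that the graph (V, F) is k-colorable) if and only if there exist x ∈ ℂ^V and y ∈ ℂ^E satisfying: Σ_{{i,j} ∈ E} y_{ij} − R = 0; x_i^k = 1 for every vertex i ∈ V; and, for every edge {i,j} ∈ E, y_{ij}² − y_{ij} = 0 and y_{ij}·(x_i^{k−1} + x_i^{k−2}·x_j + ⋯ + x_j^{k−1}) = 0. -/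
/-!
Encode a `k`-colouring by `k`-th roots of unity `x_i` and the chosen edge set `F` by its
indicator vector `y`. The relation `y² = y` forces `y ∈ {0, 1}`, so `∑ y = R` says `|F| = R`.
For `k`-th roots of unity `a, b` in characteristic zero,
`(b - a) · ∑_t a^(k-1-t) b^t = b^k - a^k = 0`, while at `a = b` the sum is `k a^(k-1) ≠ 0`;
hence the sum vanishes exactly when `a ≠ b`, and `y_ij · ∑ = 0` says that the endpoints of
every chosen edge get distinct colours.
-/

open Finset Polynomial

theorem geom_sum₂_eq_zero_iff_ne {R : Type*} [CommRing R] [IsDomain R] [CharZero R] {k : ℕ}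
    (hk : k ≠ 0) {a b : R} (ha : a ^ k = 1) (hb : b ^ k = 1) :
    ∑ t ∈ range k, a ^ (k - 1 - t) * b ^ t = 0 ↔ a ≠ b := by
  constructor
  · rintro hsum rfl
    have ha0 : a ≠ 0 := by rintro rfl; simp [zero_pow hk] at ha
    rw [sum_congr rfl fun t _ => mul_comm _ _, geom_sum₂_self] at hsum
    exact mul_ne_zero (Nat.cast_ne_zero.2 hk) (pow_ne_zero _ ha0) hsum
  · intro hab
    have hprod := geom_sum₂_mul b a k
    rw [ha, hb, sub_self] at hprod
    rw [sum_congr rfl fun t _ => mul_comm _ _]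
    exact (mul_eq_zero.1 hprod).resolve_right (sub_ne_zero.2 hab.symm)

theorem Finset.sum_eq_card_filter_of_isIdempotentElem {ι R : Type*} [Semiring R]
    [IsLeftCancelMulZero R] (s : Finset ι) {y : ι → R} [DecidablePred (y · = 1)]
    (hy : ∀ i ∈ s, IsIdempotentElem (y i)) :
    ∑ i ∈ s, y i = #(s.filter (y · = 1)) := by
  rw [← sum_boole]
  refine sum_congr rfl fun i hi => ?_
  rcases IsIdempotentElem.iff_eq_zero_or_one.1 (hy i hi) with h | h <;> simp [h]

theorem SimpleGraph.colorable_iff_exists_pow_eq_one {V R : Type*} [CommRing R] [IsDomain R]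
    (H : SimpleGraph V) {k : ℕ} (hk : 0 < k) {ζ : R} (hζ : IsPrimitiveRoot ζ k) :
    H.Colorable k ↔ ∃ x : V → R, (∀ i, x i ^ k = 1) ∧ ∀ ⦃i j⦄, H.Adj i j → x i ≠ x j := by
  have hcard : Fintype.card (nthRootsFinset k (1 : R)) = k := by
    rw [Fintype.card_coe, hζ.card_nthRootsFinset]
  constructor
  · intro hcol
    let C : H.Coloring (nthRootsFinset k (1 : R)) := hcol.toColoring hcard.ge
    exact ⟨fun i => C i, fun i => (mem_nthRootsFinset hk 1).1 (C i).2,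
      fun i j hij h => C.valid hij (Subtype.ext h)⟩
  · rintro ⟨x, hx, hxadj⟩
    let C : H.Coloring (nthRootsFinset k (1 : R)) :=
      Coloring.mk (fun i => ⟨x i, (mem_nthRootsFinset hk 1).2 (hx i)⟩)
        fun hij h => hxadj hij (congrArg Subtype.val h)
    exact hcard ▸ C.colorable

/-- A finite simple graph `G` on `Fin n` has a `k`-colorable subgraph with
`R` edges (a set `F` of `R` edges of `G` such that `(V, F)` is `k`-colorable) if and only if
the polynomial system `∑_{e ∈ E} y_e - R = 0`; `x_i^k = 1` for every vertex `i`; and, for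
every edge `{i,j}`, `y_{ij}² - y_{ij} = 0` and
`y_{ij} (x_i^{k-1} + x_i^{k-2} x_j + ⋯ + x_j^{k-1}) = 0`, has a solution. -/
theorem kColorableSubgraph_iff_polynomial_system (n k R : ℕ) (hk : 1 ≤ k)
    (G : SimpleGraph (Fin n)) [DecidableRel G.Adj] :
    (∃ F : Finset (Sym2 (Fin n)), (F : Set (Sym2 (Fin n))) ⊆ G.edgeSet ∧ F.card = R ∧
        (SimpleGraph.fromEdgeSet (F : Set (Sym2 (Fin n)))).Colorable k) ↔
      ∃ (x : Fin n → ℂ) (y : Sym2 (Fin n) → ℂ),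
        ((∑ e ∈ G.edgeFinset, y e) - (R : ℂ) = 0) ∧
        (∀ i : Fin n, x i ^ k = 1) ∧
        (∀ e ∈ G.edgeFinset, y e ^ 2 - y e = 0) ∧
        (∀ i j : Fin n, G.Adj i j →
          y s(i, j) * ∑ t ∈ Finset.range k, x i ^ (k - 1 - t) * x j ^ t = 0) := by
  classical
  have hk₀ : k ≠ 0 := by omega
  have hcol := fun H : SimpleGraph (Fin n) =>
    H.colorable_iff_exists_pow_eq_one hk (Complex.isPrimitiveRoot_exp k hk₀)
  constructor
  · rintro ⟨F, hFE, rfl, hF⟩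
    obtain ⟨x, hx, hxadj⟩ := (hcol _).1 hF
    refine ⟨x, fun e => if e ∈ F then 1 else 0, ?_, hx, fun e _ => by dsimp only; split_ifs <;> simp, ?_⟩
    · rw [sum_boole, filter_mem_eq_inter, inter_eq_right.2 fun e he => G.mem_edgeFinset.2 (hFE he),
        sub_self]
    · intro i j hij
      dsimp only
      split_ifs with hF
      · rw [one_mul, geom_sum₂_eq_zero_iff_ne hk₀ (hx i) (hx j)]
        exact hxadj ((SimpleGraph.fromEdgeSet_adj _).2 ⟨hF, hij.ne⟩)
      · exact zero_mul _
  · rintro ⟨x, y, hsum, hx, hy, hxy⟩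
    have hidem : ∀ e ∈ G.edgeFinset, IsIdempotentElem (y e) := fun e he => by
      rw [IsIdempotentElem, ← sq, ← sub_eq_zero]; exact hy e he
    refine ⟨G.edgeFinset.filter (y · = 1), fun e he => G.mem_edgeFinset.1 (mem_filter.1 he).1,
      ?_, (hcol _).2 ⟨x, hx, fun i j hij => ?_⟩⟩
    · rw [sub_eq_zero, sum_eq_card_filter_of_isIdempotentElem _ hidem] at hsum
      exact_mod_cast hsum
    · obtain ⟨hmem, hne⟩ := (SimpleGraph.fromEdgeSet_adj _).1 hij
      obtain ⟨hE, hy1⟩ := mem_filter.1 hmem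
      have hedge := hxy i j (G.mem_edgeFinset.1 hE)
      rwa [hy1, one_mul, geom_sum₂_eq_zero_iff_ne hk₀ (hx i) (hx j)] at hedge
end

section
/- Let G be a finite simple graph with edge set E and maximum vertex degree Δ ≥ 1. Then G admits a proper edge coloring with Δ colors (equivalently, by Vizing's theorem, the edge-chromatic number of G equals Δ rather than Δ+1) if and only if there exist x ∈ ℂ^E and s ∈ ℂ^V satisfying: x_{ij}^Δ = 1 for every edge {i,j} ∈ E, and for every vertex i, s_i · ∏_{j,k ∈ Adj(i), j < k} (x_{ij} − x_{ik}) = 1, where Adj(i) is the set of vertices adjacent to i and x_{ij} denotes the variable of the edge {i,j}. -/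
/-- A finite simple graph `G` on `Fin n` with maximum degree `Δ ≥ 1`
admits a proper edge coloring with `Δ` colors if and only if the polynomial system
`x_{ij}^Δ = 1` for every edge `{i,j}`, and
`t_i ∏_{j,k ∈ Adj(i), j < k} (x_{ij} - x_{ik}) = 1` for every vertex `i`,
has a solution `x ∈ ℂ^E`, `t ∈ ℂ^V`. -/
theorem edgeColoring_iff_polynomial_system (n : ℕ) (G : SimpleGraph (Fin n))
    [DecidableRel G.Adj] (hΔ : 1 ≤ G.maxDegree) :
    (∃ c : Sym2 (Fin n) → Fin G.maxDegree,
        ∀ i j k : Fin n, G.Adj i j → G.Adj i k → j ≠ k → c s(i, j) ≠ c s(i, k)) ↔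
      ∃ (x : Sym2 (Fin n) → ℂ) (t : Fin n → ℂ),
        (∀ i j : Fin n, G.Adj i j → x s(i, j) ^ G.maxDegree = 1) ∧
        (∀ i : Fin n,
          t i * ∏ p ∈ (G.neighborFinset i ×ˢ G.neighborFinset i).filter
              (fun p => p.1 < p.2), (x s(i, p.1) - x s(i, p.2)) = 1) := by
  set Δ := G.maxDegree with hΔdef
  have hΔ0 : (Δ : ℕ) ≠ 0 := by omega
  set ζ : ℂ := Complex.exp (2 * Real.pi * Complex.I / Δ) with hζ
  have hprim : IsPrimitiveRoot ζ Δ := Complex.isPrimitiveRoot_exp Δ hΔ0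
  constructor
  · rintro ⟨c, hc⟩
    refine ⟨fun e => ζ ^ (c e : ℕ), fun i =>
      (∏ p ∈ (G.neighborFinset i ×ˢ G.neighborFinset i).filter
          (fun p => p.1 < p.2), (ζ ^ (c s(i, p.1) : ℕ) - ζ ^ (c s(i, p.2) : ℕ)))⁻¹,
      ?_, ?_⟩
    · intro i j _
      rw [← pow_mul, mul_comm, pow_mul, hprim.pow_eq_one, one_pow]
    · intro i
      rw [inv_mul_cancel₀]
      rw [Finset.prod_ne_zero_iff]
      rintro ⟨j, k⟩ hp
      simp only [Finset.mem_filter, Finset.mem_product, SimpleGraph.mem_neighborFinset] at hp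
      obtain ⟨⟨hj, hk⟩, hjk⟩ := hp
      intro hzero
      have heq : ζ ^ (c s(i, j) : ℕ) = ζ ^ (c s(i, k) : ℕ) := by
        linear_combination hzero
      have := hprim.pow_inj (c s(i, j)).isLt (c s(i, k)).isLt heq
      exact hc i j k hj hk hjk.ne (Fin.ext this)
  · rintro ⟨x, t, hx, ht⟩
    haveI : NeZero Δ := ⟨hΔ0⟩
    classical
    refine ⟨fun e => if h : ∃ m : Fin Δ, x e = ζ ^ (m : ℕ) then h.choose
      else ⟨0, hΔ⟩, ?_⟩
    intro i j k hj hk hjk hcontra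
    -- distinct x values on distinct edges at i
    have hne : x s(i, j) ≠ x s(i, k) := by
      have hnz : ∀ p ∈ (G.neighborFinset i ×ˢ G.neighborFinset i).filter
          (fun p => p.1 < p.2), x s(i, p.1) - x s(i, p.2) ≠ 0 := by
        have := ht i
        intro p hp h0
        rw [Finset.prod_eq_zero hp h0, mul_zero] at this
        exact zero_ne_one this
      rcases lt_or_gt_of_ne hjk with h | h
      · have := hnz (j, k) (by
          simp [Finset.mem_filter, Finset.mem_product, SimpleGraph.mem_neighborFinset, hj, hk, h])
        intro he; exact this (by rw [he]; ring)
      · have := hnz (k, j) (by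
          simp [Finset.mem_filter, Finset.mem_product, SimpleGraph.mem_neighborFinset, hj, hk, h])
        intro he; exact this (by rw [he]; ring)
    have hex : ∀ e : Sym2 (Fin n), x e ^ Δ = 1 → ∃ m : Fin Δ, x e = ζ ^ (m : ℕ) := by
      intro e he
      obtain ⟨m, hm, hm2⟩ := hprim.eq_pow_of_pow_eq_one he
      exact ⟨⟨m, hm⟩, hm2.symm⟩
    have h1 := hex _ (hx i j hj)
    have h2 := hex _ (hx i k hk)
    simp only [dif_pos h1, dif_pos h2] at hcontra
    apply hne
    rw [h1.choose_spec, h2.choose_spec, hcontra]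
end

section
/- Let G be a finite simple graph with vertex set V = {1,…,n} and edge set E, let d ≥ 1, and let D = {0,1,…,d−1}. Then there exists a labeling c : V → D with ε(c) ≠ 0 (i.e., G is d-colorable) if and only if there exists a labeling c* : V → D with ε*(c*) ≠ 0 (i.e., G is dually d-colorable). -/
open Finset

/-- The edge set of `G`, as ordered pairs `(i, j)` with `i < j`. -/
def edgePairs {n : ℕ} (G : SimpleGraph (Fin n)) [DecidableRel G.Adj] :
    Finset (Fin n × Fin n) :=
  Finset.univ.filter fun p => p.1 < p.2 ∧ G.Adj p.1 p.2

/-- `ε(c) = ∏_{i<j, {i,j}∈E} (α^{c(i)} - α^{c(j)})`, where `α = exp(2πi/d)`;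
`c` is a proper `d`-coloring exactly when `ε(c) ≠ 0`. -/
noncomputable def epsColor {n : ℕ} (d : ℕ) (G : SimpleGraph (Fin n)) [DecidableRel G.Adj]
    (c : Fin n → Fin d) : ℂ :=
  ∏ p ∈ edgePairs G,
    (Complex.exp (2 * Real.pi * Complex.I / d) ^ (c p.1 : ℕ) -
      Complex.exp (2 * Real.pi * Complex.I / d) ^ (c p.2 : ℕ))

/-- An orientation of `G`: for each edge `(i, j)` with `i < j`, the value `true` means the
edge is directed `i → j` (the standard direction) and `false` means `j → i` (a flip). -/
def orientSign {n : ℕ} (G : SimpleGraph (Fin n)) [DecidableRel G.Adj]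
    (O : {p : Fin n × Fin n // p ∈ edgePairs G} → Bool) : ℤ :=
  (-1 : ℤ) ^ (Finset.univ.filter fun e : {p : Fin n × Fin n // p ∈ edgePairs G} =>
      O e = false).card

/-- The out-degree of vertex `v` in the orientation `O`. -/
def outDeg {n : ℕ} (G : SimpleGraph (Fin n)) [DecidableRel G.Adj]
    (O : {p : Fin n × Fin n // p ∈ edgePairs G} → Bool) (v : Fin n) : ℕ :=
  (Finset.univ.filter fun e : {p : Fin n × Fin n // p ∈ edgePairs G} =>
      (O e = true ∧ e.1.1 = v) ∨ (O e = false ∧ e.1.2 = v)).card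

/-- `ε*(c*) = ∑ { sign(O) : O an orientation of G with [δ^O] = c* }`;
`c*` is a dual `d`-coloring exactly when `ε*(c*) ≠ 0`. -/
def epsDual {n : ℕ} (d : ℕ) (G : SimpleGraph (Fin n)) [DecidableRel G.Adj]
    (c : Fin n → Fin d) : ℤ :=
  ∑ O ∈ Finset.univ.filter
      (fun O : {p : Fin n × Fin n // p ∈ edgePairs G} → Bool =>
        ∀ v : Fin n, outDeg G O v % d = (c v : ℕ)),
    orientSign G O

/- ## Auxiliary development -/

noncomputable def rootAlpha (d : ℕ) : ℂ := Complex.exp (2 * Real.pi * Complex.I / d)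

lemma rootAlpha_prim {d : ℕ} (hd : 1 ≤ d) : IsPrimitiveRoot (rootAlpha d) d :=
  Complex.isPrimitiveRoot_exp d (by omega)

lemma rootAlpha_pow_d {d : ℕ} (hd : 1 ≤ d) : rootAlpha d ^ d = 1 :=
  (rootAlpha_prim hd).pow_eq_one

lemma rootAlpha_pow_mod {d : ℕ} (hd : 1 ≤ d) (k : ℕ) :
    rootAlpha d ^ k = rootAlpha d ^ (k % d) := by
  conv_lhs => rw [← Nat.div_add_mod k d]
  rw [pow_add, pow_mul, rootAlpha_pow_d hd, one_pow, one_mul]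

lemma rootAlpha_pow_congr {d : ℕ} (hd : 1 ≤ d) {a b : ℕ} (h : a % d = b % d) :
    rootAlpha d ^ a = rootAlpha d ^ b := by
  rw [rootAlpha_pow_mod hd a, rootAlpha_pow_mod hd b, h]

lemma rootAlpha_ne_zero {d : ℕ} : rootAlpha d ≠ 0 := Complex.exp_ne_zero _

/-- Step A: expansion of `epsColor` over orientations. -/
lemma epsColor_expand {n : ℕ} (d : ℕ) (G : SimpleGraph (Fin n)) [DecidableRel G.Adj]
    (c : Fin n → Fin d) :
    epsColor d G c =
      ∑ O : {p : Fin n × Fin n // p ∈ edgePairs G} → Bool,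
        (orientSign G O : ℂ) * rootAlpha d ^ (∑ v, (c v : ℕ) * outDeg G O v) := by
  classical
  have h1 : epsColor d G c =
      ∏ e : {p : Fin n × Fin n // p ∈ edgePairs G},
        ∑ b ∈ (Finset.univ : Finset Bool),
          (if b then rootAlpha d ^ ((c e.1.1 : ℕ)) else -(rootAlpha d ^ ((c e.1.2 : ℕ)))) := by
    rw [epsColor, ← Finset.prod_coe_sort]
    refine Finset.prod_congr rfl fun e _ => ?_
    simp [Fintype.sum_bool, rootAlpha, sub_eq_add_neg]
  rw [h1, Finset.prod_univ_sum]
  rw [Fintype.piFinset_univ]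
  refine Finset.sum_congr rfl fun O _ => ?_
  -- fixed orientation O
  rw [← Finset.prod_filter_mul_prod_filter_not Finset.univ (fun e => O e = true)
    (fun e => if O e = true then rootAlpha d ^ ((c e.1.1 : ℕ)) else -(rootAlpha d ^ ((c e.1.2 : ℕ))))]
  have hA : (∏ e ∈ Finset.univ.filter (fun e : {p : Fin n × Fin n // p ∈ edgePairs G} => O e = true),
      (if O e = true then rootAlpha d ^ ((c e.1.1 : ℕ)) else -(rootAlpha d ^ ((c e.1.2 : ℕ)))))
      = ∏ e ∈ Finset.univ.filter (fun e : {p : Fin n × Fin n // p ∈ edgePairs G} => O e = true),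
        rootAlpha d ^ ((c e.1.1 : ℕ)) :=
    Finset.prod_congr rfl fun e he => by simp [(Finset.mem_filter.mp he).2]
  have hB : (∏ e ∈ Finset.univ.filter (fun e : {p : Fin n × Fin n // p ∈ edgePairs G} => ¬ (O e = true)),
      (if O e = true then rootAlpha d ^ ((c e.1.1 : ℕ)) else -(rootAlpha d ^ ((c e.1.2 : ℕ)))))
      = ∏ e ∈ Finset.univ.filter (fun e : {p : Fin n × Fin n // p ∈ edgePairs G} => ¬ (O e = true)),
        -(rootAlpha d ^ ((c e.1.2 : ℕ))) :=
    Finset.prod_congr rfl fun e he => by simp [(Finset.mem_filter.mp he).2]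
  rw [hA, hB]
  have hneg : (∏ e ∈ Finset.univ.filter (fun e : {p : Fin n × Fin n // p ∈ edgePairs G} => ¬ (O e = true)),
      -(rootAlpha d ^ ((c e.1.2 : ℕ)))) =
      (-1 : ℂ) ^ (Finset.univ.filter (fun e : {p : Fin n × Fin n // p ∈ edgePairs G} => ¬ (O e = true))).card *
        ∏ e ∈ Finset.univ.filter (fun e : {p : Fin n × Fin n // p ∈ edgePairs G} => ¬ (O e = true)), rootAlpha d ^ ((c e.1.2 : ℕ)) := by
    rw [← Finset.prod_const, ← Finset.prod_mul_distrib]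
    exact Finset.prod_congr rfl fun e _ => by ring
  rw [hneg]
  have hfilter : (Finset.univ.filter (fun e : {p : Fin n × Fin n // p ∈ edgePairs G} => ¬ (O e = true)))
      = (Finset.univ.filter (fun e => O e = false)) := by
    refine Finset.filter_congr fun e _ => ?_
    simp [Bool.not_eq_true]
  have hsign : ((orientSign G O : ℤ) : ℂ) = (-1 : ℂ) ^ (Finset.univ.filter (fun e : {p : Fin n × Fin n // p ∈ edgePairs G} => ¬ (O e = true))).card := by
    rw [hfilter, orientSign]; push_cast; ring
  rw [Finset.prod_pow_eq_pow_sum, Finset.prod_pow_eq_pow_sum, hsign]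
  have hexp : (∑ e ∈ Finset.univ.filter (fun e => O e = true), ((c e.1.1 : ℕ)))
      + (∑ e ∈ Finset.univ.filter (fun e : {p : Fin n × Fin n // p ∈ edgePairs G} => ¬ (O e = true)), ((c e.1.2 : ℕ)))
      = ∑ v, (c v : ℕ) * outDeg G O v := by
    rw [Finset.sum_filter, Finset.sum_filter, ← Finset.sum_add_distrib]
    have step : ∀ e : {p : Fin n × Fin n // p ∈ edgePairs G},
        ((if O e = true then ((c e.1.1 : ℕ)) else 0) + (if ¬ (O e = true) then ((c e.1.2 : ℕ)) else 0))
        = ∑ v, (if (O e = true ∧ e.1.1 = v) ∨ (O e = false ∧ e.1.2 = v) then (c v : ℕ) else 0) := by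
      intro e
      by_cases h : O e = true
      · simp [h, Finset.sum_ite_eq]
      · have h' : O e = false := by simpa using h
        simp [h', Finset.sum_ite_eq]
    rw [Finset.sum_congr rfl fun e _ => step e, Finset.sum_comm]
    refine Finset.sum_congr rfl fun v _ => ?_
    rw [outDeg, Finset.card_eq_sum_ones, Finset.mul_sum, Finset.sum_filter]
    simp [mul_ite]
  rw [← hexp, pow_add]
  ring

/-- reduce exponent sum mod d componentwise -/
lemma sum_mul_mod_eq {n d : ℕ} (hd : 1 ≤ d) (c : Fin n → Fin d) (g : Fin n → ℕ) :
    rootAlpha d ^ (∑ v, (c v : ℕ) * g v) = rootAlpha d ^ (∑ v, (c v : ℕ) * (g v % d)) := by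
  refine rootAlpha_pow_congr hd ?_
  rw [Finset.sum_nat_mod, Finset.sum_nat_mod (f := fun v => (c v : ℕ) * (g v % d))]
  congr 1
  refine Finset.sum_congr rfl fun v _ => ?_
  exact (Nat.ModEq.mul_left _ (Nat.mod_modEq _ _)).symm

/-- Step C: Fourier relation. -/
lemma epsColor_eq_sum_dual {n : ℕ} (d : ℕ) (hd : 1 ≤ d) (G : SimpleGraph (Fin n))
    [DecidableRel G.Adj] (c : Fin n → Fin d) :
    epsColor d G c =
      ∑ b : Fin n → Fin d,
        (epsDual d G b : ℂ) * rootAlpha d ^ (∑ v, (c v : ℕ) * (b v : ℕ)) := by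
  classical
  rw [epsColor_expand d G c]
  rw [← Finset.sum_fiberwise (Finset.univ)
    (fun O : {p : Fin n × Fin n // p ∈ edgePairs G} → Bool =>
      (fun v => (⟨outDeg G O v % d, Nat.mod_lt _ (by omega)⟩ : Fin d)))
    (fun O => (orientSign G O : ℂ) * rootAlpha d ^ (∑ v, (c v : ℕ) * outDeg G O v))]
  refine Finset.sum_congr rfl fun b _ => ?_
  rw [epsDual]
  have hfil : (Finset.univ.filter fun O : {p : Fin n × Fin n // p ∈ edgePairs G} → Bool =>
        (fun v => (⟨outDeg G O v % d, Nat.mod_lt _ (by omega)⟩ : Fin d)) = b)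
      = (Finset.univ.filter fun O => ∀ v : Fin n, outDeg G O v % d = (b v : ℕ)) := by
    refine Finset.filter_congr fun O _ => ?_
    constructor
    · intro h v; rw [← h]
    · intro h; funext v; exact Fin.ext (h v)
  rw [hfil]
  push_cast
  rw [Finset.sum_mul]
  refine Finset.sum_congr rfl fun O hO => ?_
  simp only [Finset.mem_filter] at hO
  congr 1
  rw [sum_mul_mod_eq hd c (fun v => outDeg G O v)]
  congr 1
  refine Finset.sum_congr rfl fun v _ => ?_
  rw [hO.2 v]

/-- Geometric-sum orthogonality for a single vertex. -/
lemma single_orth {d : ℕ} (hd : 1 ≤ d) (a b : Fin d) :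
    (∑ k : Fin d, rootAlpha d ^ ((k : ℕ) * (a : ℕ)) * (rootAlpha d ^ ((k : ℕ) * (b : ℕ)))⁻¹)
      = if a = b then (d : ℂ) else 0 := by
  classical
  set β : ℂ := rootAlpha d ^ (a : ℕ) * (rootAlpha d ^ (b : ℕ))⁻¹ with hβ
  have hterm : ∀ k : Fin d,
      rootAlpha d ^ ((k : ℕ) * (a : ℕ)) * (rootAlpha d ^ ((k : ℕ) * (b : ℕ)))⁻¹ = β ^ (k : ℕ) := by
    intro k
    rw [hβ, mul_pow, mul_comm (k : ℕ) (a : ℕ), mul_comm (k : ℕ) (b : ℕ), pow_mul, pow_mul,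
      inv_pow]
  rw [Finset.sum_congr rfl fun k _ => hterm k]
  by_cases hab : a = b
  · subst hab
    have : β = 1 := by
      rw [hβ, mul_inv_cancel₀ (pow_ne_zero _ rootAlpha_ne_zero)]
    simp [this]
  · rw [if_neg hab]
    have hβ1 : β ≠ 1 := by
      intro h
      apply hab
      have : rootAlpha d ^ (a : ℕ) = rootAlpha d ^ (b : ℕ) :=
        (mul_inv_eq_one₀ (pow_ne_zero _ rootAlpha_ne_zero)).mp (hβ ▸ h)
      exact Fin.ext ((rootAlpha_prim hd).pow_inj a.isLt b.isLt this)
    have hβd : β ^ d = 1 := by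
      rw [hβ, mul_pow, inv_pow, ← pow_mul, ← pow_mul, mul_comm (a : ℕ) d, mul_comm (b : ℕ) d,
        pow_mul, pow_mul, rootAlpha_pow_d hd, one_pow, one_pow, inv_one, mul_one]
    rw [Fin.sum_univ_eq_sum_range (fun k => β ^ k) d, geom_sum_eq hβ1, hβd, sub_self, zero_div]

/-- Full orthogonality over labelings. -/
lemma full_orth {n d : ℕ} (hd : 1 ≤ d) (a b : Fin n → Fin d) :
    (∑ c : Fin n → Fin d,
      rootAlpha d ^ (∑ v, (c v : ℕ) * (a v : ℕ)) * (rootAlpha d ^ (∑ v, (c v : ℕ) * (b v : ℕ)))⁻¹)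
      = if a = b then ((d : ℂ)) ^ n else 0 := by
  classical
  have hterm : ∀ c : Fin n → Fin d,
      rootAlpha d ^ (∑ v, (c v : ℕ) * (a v : ℕ)) * (rootAlpha d ^ (∑ v, (c v : ℕ) * (b v : ℕ)))⁻¹
      = ∏ v, (rootAlpha d ^ ((c v : ℕ) * (a v : ℕ)) * (rootAlpha d ^ ((c v : ℕ) * (b v : ℕ)))⁻¹) := by
    intro c
    rw [Finset.prod_mul_distrib, Finset.prod_inv_distrib,
      Finset.prod_pow_eq_pow_sum, Finset.prod_pow_eq_pow_sum]
  rw [Finset.sum_congr rfl fun c _ => hterm c]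
  have := Finset.prod_univ_sum (fun _ : Fin n => (Finset.univ : Finset (Fin d)))
    (fun v k => rootAlpha d ^ ((k : ℕ) * (a v : ℕ)) * (rootAlpha d ^ ((k : ℕ) * (b v : ℕ)))⁻¹)
  rw [Fintype.piFinset_univ] at this
  rw [← this]
  have hv : ∀ v : Fin n, (∑ k : Fin d, rootAlpha d ^ ((k : ℕ) * (a v : ℕ)) *
      (rootAlpha d ^ ((k : ℕ) * (b v : ℕ)))⁻¹) = if a v = b v then (d : ℂ) else 0 :=
    fun v => single_orth hd (a v) (b v)
  rw [Finset.prod_congr rfl fun v _ => hv v]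
  by_cases hab : a = b
  · subst hab; simp
  · rw [if_neg hab]
    obtain ⟨v, hv'⟩ : ∃ v, a v ≠ b v := by
      by_contra h
      push_neg at h
      exact hab (funext h)
    exact Finset.prod_eq_zero (Finset.mem_univ v) (by rw [if_neg hv'])


/-- A finite simple graph `G` has a `d`-coloring (a labeling `c` with
`ε(c) ≠ 0`) if and only if it has a dual `d`-coloring (a labeling `c*` with `ε*(c*) ≠ 0`). -/
theorem colorable_iff_dual_colorable (n d : ℕ) (hd : 1 ≤ d)
    (G : SimpleGraph (Fin n)) [DecidableRel G.Adj] :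
    (∃ c : Fin n → Fin d, epsColor d G c ≠ 0) ↔
    (∃ c : Fin n → Fin d, epsDual d G c ≠ 0) := by
  classical
  constructor
  · rw [← not_imp_not]
    push_neg
    intro h c
    rw [epsColor_eq_sum_dual d hd G c]
    refine Finset.sum_eq_zero fun b _ => ?_
    rw [h b]
    push_cast
    ring
  · rw [← not_imp_not]
    push_neg
    intro h b
    have key : (∑ c : Fin n → Fin d,
        epsColor d G c * (rootAlpha d ^ (∑ v, (c v : ℕ) * (b v : ℕ)))⁻¹)
        = (epsDual d G b : ℂ) * (d : ℂ) ^ n := by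
      have h1 : ∀ c : Fin n → Fin d,
          epsColor d G c * (rootAlpha d ^ (∑ v, (c v : ℕ) * (b v : ℕ)))⁻¹
          = ∑ a : Fin n → Fin d, (epsDual d G a : ℂ) *
              (rootAlpha d ^ (∑ v, (c v : ℕ) * (a v : ℕ)) *
                (rootAlpha d ^ (∑ v, (c v : ℕ) * (b v : ℕ)))⁻¹) := by
        intro c
        rw [epsColor_eq_sum_dual d hd G c, Finset.sum_mul]
        exact Finset.sum_congr rfl fun a _ => by ring
      rw [Finset.sum_congr rfl fun c _ => h1 c, Finset.sum_comm]
      have h2 : ∀ a : Fin n → Fin d,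
          (∑ c : Fin n → Fin d, (epsDual d G a : ℂ) *
            (rootAlpha d ^ (∑ v, (c v : ℕ) * (a v : ℕ)) *
              (rootAlpha d ^ (∑ v, (c v : ℕ) * (b v : ℕ)))⁻¹))
          = (epsDual d G a : ℂ) * (if a = b then ((d : ℂ)) ^ n else 0) := by
        intro a
        rw [← Finset.mul_sum, full_orth hd a b]
      rw [Finset.sum_congr rfl fun a _ => h2 a]
      rw [Finset.sum_eq_single b]
      · rw [if_pos rfl]
      · intro a _ ha; rw [if_neg ha, mul_zero]
      · intro h'; exact absurd (Finset.mem_univ b) h'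
    have hz : (∑ c : Fin n → Fin d,
        epsColor d G c * (rootAlpha d ^ (∑ v, (c v : ℕ) * (b v : ℕ)))⁻¹) = 0 :=
      Finset.sum_eq_zero fun c _ => by rw [h c, zero_mul]
    rw [hz] at key
    have hdn : ((d : ℂ)) ^ n ≠ 0 := pow_ne_zero _ (Nat.cast_ne_zero.mpr (by omega))
    rcases mul_eq_zero.mp key.symm with h' | h'
    · exact_mod_cast h'
    · exact absurd h' hdn
end

section
/- Let G be a finite simple graph with vertex set V = {1,…,n}, edge set E, and maximum degree Δ(G), and let d ≥ Δ(G)+1. Then there exists an acyclic orientation O of G such that the labeling s : V → {0,…,d−1} defined by s(i) = δ^O_i (the out-degree of vertex i in O, which is at most Δ(G) ≤ d−1) is simultaneously a proper d-coloring of G (adjacent vertices receive distinct labels, i.e., ε(s) ≠ 0) and a dual d-coloring of G (ε*(s) ≠ 0). In particular, the simultaneous chromatic number of G is at most Δ(G)+1. -/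
open Finset

/-- The directed-edge relation of an orientation `O`: `u ⟶ w` if some edge is directed
from `u` to `w`. -/
def orientRel {n : ℕ} (G : SimpleGraph (Fin n)) [DecidableRel G.Adj]
    (O : {p : Fin n × Fin n // p ∈ edgePairs G} → Bool) (u w : Fin n) : Prop :=
  ∃ e : {p : Fin n × Fin n // p ∈ edgePairs G},
    (O e = true ∧ e.1 = (u, w)) ∨ (O e = false ∧ e.1 = (w, u))

/-!
Order the vertices greedily: a vertex of maximum degree in the current graph gets the lowest
rank and is deleted. Orienting every edge towards the larger rank gives an acyclic orientation
whose out-degree at a vertex `v` is the degree of `v` at the moment it is deleted. A neighbour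
deleted later then has strictly smaller out-degree, so the out-degrees, all at most `Δ(G) < d`,
form a proper coloring, and distinct values give distinct powers of the primitive root `α`.
For the dual coloring, an orientation with the same out-degrees as the rank orientation has the
same value of `∑ v, r v * outDeg v = ∑ e, r (tail e)`, and the rank orientation is the unique
minimiser of the right-hand side; so exactly one orientation is counted in `ε*` and `ε* = ±1`.
-/

namespace SimultaneousColoring

section UpDegree

variable {V : Type*} (G : SimpleGraph V) [DecidableRel G.Adj]

def upDegree (S : Finset V) (r : V → ℕ) (u : V) : ℕ :=
  #{x ∈ S | G.Adj u x ∧ r u < r x}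

lemma upDegree_le_card_adj (S : Finset V) (r : V → ℕ) (u : V) :
    upDegree G S r u ≤ #{x ∈ S | G.Adj u x} :=
  card_le_card (monotone_filter_right _ fun _ _ h => h.1)

variable [DecidableEq V]

lemma upDegree_erase_lt {S : Finset V} {v w : V} (r : V → ℕ) (hv : v ∈ S) (hwv : G.Adj w v) :
    upDegree G (S.erase v) r w < #{x ∈ S | G.Adj w x} :=
  calc upDegree G (S.erase v) r w
      ≤ #{x ∈ S.erase v | G.Adj w x} := upDegree_le_card_adj G _ r w
    _ = #({x ∈ S | G.Adj w x}.erase v) := by rw [filter_erase]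
    _ < #{x ∈ S | G.Adj w x} := card_erase_lt_of_mem (mem_filter.mpr ⟨hv, hwv⟩)

def prependRank (v : V) (r : V → ℕ) : V → ℕ := fun x => if x = v then 0 else r x + 1

lemma upDegree_prependRank_of_ne {S : Finset V} {v u : V} (r : V → ℕ) (huv : u ≠ v) :
    upDegree G S (prependRank v r) u = upDegree G (S.erase v) r u := by
  unfold upDegree prependRank
  congr 1
  ext x
  by_cases hxv : x = v <;> simp [hxv, huv]

lemma upDegree_prependRank_self (S : Finset V) (v : V) (r : V → ℕ) :
    upDegree G S (prependRank v r) v = #{x ∈ S | G.Adj v x} := by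
  unfold upDegree prependRank
  congr 1
  refine filter_congr fun x _ => ?_
  have : x = v → ¬ G.Adj v x := fun h => h ▸ G.irrefl
  by_cases hxv : x = v <;> simp_all

lemma injOn_prependRank {S : Finset V} {v : V} {r : V → ℕ} (hr : Set.InjOn r (S.erase v)) :
    Set.InjOn (prependRank v r) S := by
  intro a ha b hb hab
  by_cases hav : a = v <;> by_cases hbv : b = v <;>
    simp only [prependRank, hav, hbv, if_true, if_false] at hab
  · exact hav.trans hbv.symm
  · omega
  · omega
  · exact hr (mem_erase.mpr ⟨hav, ha⟩) (mem_erase.mpr ⟨hbv, hb⟩) (by omega)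

theorem exists_rank_upDegree_ne (S : Finset V) :
    ∃ r : V → ℕ, Set.InjOn r S ∧
      ∀ u ∈ S, ∀ w ∈ S, G.Adj u w → upDegree G S r u ≠ upDegree G S r w := by
  induction S using Finset.strongInduction with
  | _ S ih =>
    rcases S.eq_empty_or_nonempty with rfl | hS
    · exact ⟨fun _ => 0, by simp, by simp⟩
    obtain ⟨v, hvS, hvmax⟩ := S.exists_max_image (fun u => #{x ∈ S | G.Adj u x}) hS
    obtain ⟨r, hr, hne⟩ := ih (S.erase v) (erase_ssubset hvS)
    have hlt : ∀ w ∈ S, G.Adj v w →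
        upDegree G (S.erase v) r w < #{x ∈ S | G.Adj v x} := fun w hw hvw =>
      (upDegree_erase_lt G r hvS hvw.symm).trans_le (hvmax w hw)
    refine ⟨_, injOn_prependRank hr, fun u hu w hw huw => ?_⟩
    by_cases huv : u = v
    · subst huv
      rw [upDegree_prependRank_self, upDegree_prependRank_of_ne G r (G.ne_of_adj huw).symm]
      exact (hlt w hw huw).ne'
    by_cases hwv : w = v
    · subst hwv
      rw [upDegree_prependRank_self, upDegree_prependRank_of_ne G r huv]
      exact (hlt u hu huw.symm).ne
    rw [upDegree_prependRank_of_ne G r huv, upDegree_prependRank_of_ne G r hwv]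
    exact hne u (mem_erase.mpr ⟨huv, hu⟩) w (mem_erase.mpr ⟨hwv, hw⟩) huw

end UpDegree

section Orientation

variable {n : ℕ} {G : SimpleGraph (Fin n)} [DecidableRel G.Adj]

abbrev Edge (G : SimpleGraph (Fin n)) [DecidableRel G.Adj] : Type :=
  {p : Fin n × Fin n // p ∈ edgePairs G}

lemma Edge.lt (e : Edge G) : e.1.1 < e.1.2 := (mem_filter.mp e.2).2.1

lemma Edge.adj (e : Edge G) : G.Adj e.1.1 e.1.2 := (mem_filter.mp e.2).2.2

def tail (O : Edge G → Bool) (e : Edge G) : Fin n := if O e then e.1.1 else e.1.2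

def head (O : Edge G → Bool) (e : Edge G) : Fin n := if O e then e.1.2 else e.1.1

lemma adj_tail_head (O : Edge G → Bool) (e : Edge G) : G.Adj (tail O e) (head O e) := by
  unfold tail head
  split
  · exact e.adj
  · exact e.adj.symm

lemma eq_of_tail_eq_of_head_eq (O : Edge G → Bool) {e e' : Edge G}
    (ht : tail O e = tail O e') (hh : head O e = head O e') : e = e' := by
  have h := e.lt
  have h' := e'.lt
  simp only [tail, head] at ht hh
  apply Subtype.ext
  split_ifs at ht hh
  · exact Prod.ext ht hh
  · rw [ht, hh] at h; exact absurd h' h.asymm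
  · rw [ht, hh] at h; exact absurd h' h.asymm
  · exact Prod.ext hh ht

lemma tail_eq_head_of_ne {O O' : Edge G → Bool} {e : Edge G} (h : O e ≠ O' e) :
    tail O e = head O' e := by
  unfold tail head
  cases hO : O e <;> cases hO' : O' e <;> simp_all

lemma exists_tail_head_of_orientRel {O : Edge G → Bool} {u w : Fin n}
    (h : orientRel G O u w) : ∃ e, tail O e = u ∧ head O e = w := by
  obtain ⟨e, ⟨hO, he⟩ | ⟨hO, he⟩⟩ := h <;> exact ⟨e, by simp [tail, head, hO, he]⟩

lemma exists_tail_head_of_adj (O : Edge G → Bool) {u w : Fin n} (h : G.Adj u w) :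
    ∃ e, (tail O e = u ∧ head O e = w) ∨ (tail O e = w ∧ head O e = u) := by
  obtain ⟨e, he⟩ : ∃ e : Edge G, e.1 = (u, w) ∨ e.1 = (w, u) := by
    rcases lt_or_gt_of_ne (G.ne_of_adj h) with huw | hwu
    · exact ⟨⟨(u, w), mem_filter.mpr ⟨mem_univ _, huw, h⟩⟩, Or.inl rfl⟩
    · exact ⟨⟨(w, u), mem_filter.mpr ⟨mem_univ _, hwu, h.symm⟩⟩, Or.inr rfl⟩
  refine ⟨e, ?_⟩
  rcases he with he | he <;> cases hO : O e <;> simp [tail, head, hO, he]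

lemma outDeg_eq_card_tail (O : Edge G → Bool) (v : Fin n) :
    outDeg G O v = #{e | tail O e = v} := by
  unfold outDeg
  congr 1
  refine filter_congr fun e _ => ?_
  cases h : O e <;> simp [tail, h]

lemma outDeg_le_degree (O : Edge G → Bool) (v : Fin n) : outDeg G O v ≤ G.degree v := by
  rw [outDeg_eq_card_tail, ← G.card_neighborFinset_eq_degree]
  refine card_le_card_of_injOn (head O) (fun e he => ?_) fun e he e' he' hh => ?_
  · rw [mem_coe, mem_filter] at he
    simpa [← he.2] using adj_tail_head O e
  · simp only [coe_filter, Set.mem_ofPred_eq, mem_univ, true_and] at he he'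
    exact eq_of_tail_eq_of_head_eq O (he.trans he'.symm) hh

lemma sum_rank_mul_outDeg (r : Fin n → ℕ) (O : Edge G → Bool) :
    ∑ v, r v * outDeg G O v = ∑ e, r (tail O e) := by
  calc ∑ v, r v * outDeg G O v = ∑ v, ∑ _e ∈ {e | tail O e = v}, r v := by
        simp [outDeg_eq_card_tail, mul_comm]
    _ = ∑ e, r (tail O e) := sum_fiberwise' univ (tail O) r

variable {r : Fin n → ℕ}

def rankOrient (r : Fin n → ℕ) : Edge G → Bool := fun e => decide (r e.1.1 < r e.1.2)

lemma rank_tail_lt_head (hr : Function.Injective r) (e : Edge G) :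
    r (tail (rankOrient r) e) < r (head (rankOrient r) e) := by
  have : r e.1.1 ≠ r e.1.2 := hr.ne e.lt.ne
  unfold tail head rankOrient
  rcases this.lt_or_gt with h | h <;> simp [h, h.asymm]

lemma rankOrient_acyclic (hr : Function.Injective r) (v : Fin n) :
    ¬ Relation.TransGen (orientRel G (rankOrient r)) v v := by
  intro h
  have := Relation.TransGen.lift r (p := (· < ·)) (fun u w huw => by
    obtain ⟨e, rfl, rfl⟩ := exists_tail_head_of_orientRel huw
    exact rank_tail_lt_head hr e) _ _ h
  rw [Relation.transGen_eq_self] at this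
  exact lt_irrefl _ this

lemma outDeg_rankOrient (hr : Function.Injective r) (v : Fin n) :
    outDeg G (rankOrient r) v = upDegree G univ r v := by
  rw [outDeg_eq_card_tail, upDegree]
  refine card_bij (fun e _ => head (rankOrient r) e) (fun e he => ?_)
    (fun e he e' he' hh => ?_) fun x hx => ?_
  · rw [mem_filter] at he ⊢
    exact ⟨mem_univ _, he.2 ▸ adj_tail_head _ e, he.2 ▸ rank_tail_lt_head hr e⟩
  · rw [mem_filter] at he he'
    exact eq_of_tail_eq_of_head_eq _ (he.2.trans he'.2.symm) hh
  · obtain ⟨-, hvx, hlt⟩ := mem_filter.mp hx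
    obtain ⟨e, ⟨ht, hh⟩ | ⟨ht, hh⟩⟩ := exists_tail_head_of_adj (rankOrient r) hvx
    · exact ⟨e, mem_filter.mpr ⟨mem_univ _, ht⟩, hh⟩
    · have := rank_tail_lt_head hr e
      rw [ht, hh] at this
      omega

lemma eq_rankOrient_of_outDeg_eq (hr : Function.Injective r) (O : Edge G → Bool)
    (h : ∀ v, outDeg G O v = outDeg G (rankOrient r) v) : O = rankOrient r := by
  have hle : ∀ e ∈ univ, r (tail (rankOrient r) e) ≤ r (tail O e) := fun e _ => by
    by_cases he : O e = rankOrient r e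
    · simp [tail, he]
    · rw [tail_eq_head_of_ne he]
      exact (rank_tail_lt_head hr e).le
  have hsum : ∑ e : Edge G, r (tail (rankOrient r) e) = ∑ e, r (tail O e) := by
    rw [← sum_rank_mul_outDeg, ← sum_rank_mul_outDeg]
    simp only [h]
  funext e
  by_contra he
  have := (sum_eq_sum_iff_of_le hle).mp hsum e (mem_univ e)
  rw [tail_eq_head_of_ne he] at this
  exact (rank_tail_lt_head hr e).ne this

end Orientation

section Coloring

variable {n d : ℕ} {G : SimpleGraph (Fin n)} [DecidableRel G.Adj]

lemma epsColor_ne_zero {c : Fin n → Fin d} (hc : ∀ u w, G.Adj u w → c u ≠ c w) :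
    epsColor d G c ≠ 0 := by
  refine prod_ne_zero_iff.mpr fun p hp => sub_ne_zero_of_ne fun h => ?_
  have hα := Complex.isPrimitiveRoot_exp d (c p.1).pos.ne'
  exact hc _ _ (mem_filter.mp hp).2.2 (Fin.ext (hα.pow_inj (c p.1).isLt (c p.2).isLt h))

lemma epsDual_ne_zero_of_unique {c : Fin n → Fin d} (O : Edge G → Bool)
    (hO : ∀ O' : Edge G → Bool, (∀ v, outDeg G O' v % d = c v) ↔ O' = O) :
    epsDual d G c ≠ 0 := by
  rw [epsDual, filter_congr fun O' _ => hO O', filter_eq', if_pos (mem_univ O), sum_singleton]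
  exact pow_ne_zero _ (by norm_num)

end Coloring

end SimultaneousColoring

open SimultaneousColoring in
/-- For every graph `G` and every `d ≥ Δ(G) + 1` there is an acyclic
orientation `O` of `G` whose out-degree vector gives a labeling `s` that is simultaneously
a proper `d`-coloring (`ε(s) ≠ 0`) and a dual `d`-coloring (`ε*(s) ≠ 0`) of `G`.
In particular the simultaneous chromatic number of `G` is at most `Δ(G) + 1`. -/
theorem exists_acyclic_orientation_simultaneous_coloring (n d : ℕ)
    (G : SimpleGraph (Fin n)) [DecidableRel G.Adj] (hd : G.maxDegree + 1 ≤ d) :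
    ∃ (O : {p : Fin n × Fin n // p ∈ edgePairs G} → Bool) (s : Fin n → Fin d),
      (∀ v : Fin n, (s v : ℕ) = outDeg G O v) ∧
      (∀ v : Fin n, ¬ Relation.TransGen (orientRel G O) v v) ∧
      epsColor d G s ≠ 0 ∧
      epsDual d G s ≠ 0 := by
  obtain ⟨r, hr, hne⟩ := exists_rank_upDegree_ne G (univ : Finset (Fin n))
  have hr : Function.Injective r := by simpa using hr
  have hlt : ∀ (O : Edge G → Bool) v, outDeg G O v < d := fun O v => by
    have := G.degree_le_maxDegree v
    have := outDeg_le_degree O v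
    omega
  refine ⟨rankOrient r, fun v => ⟨_, hlt (rankOrient r) v⟩, fun v => rfl,
    rankOrient_acyclic hr, epsColor_ne_zero (G := G) fun u w huw h => ?_,
    epsDual_ne_zero_of_unique (rankOrient r) fun O => ?_⟩
  · refine hne u (mem_univ u) w (mem_univ w) huw ?_
    simpa only [Fin.ext_iff, outDeg_rankOrient hr] using h
  · simp only [Nat.mod_eq_of_lt (hlt _ _)]
    exact ⟨eq_rankOrient_of_outDeg_eq hr O, fun h _ => h ▸ rfl⟩
end

section
/- Let G be a finite simple graph with vertex set V = {1,…,n} and edge set E, let r ≥ 1, and suppose that polynomials A, (Q_i)_{i∈V}, (Q_{ij})_{{i,j}∈E} in ℂ[x_1,…,x_n] form a Nullstellensatz certificate 1 = A·(−(α(G)+r) + Σ_{i=1}^n x_i) + Σ_{i∈V} Q_i·(x_i² − x_i) + Σ_{{i,j}∈E} Q_{ij}·x_i·x_j of degree d. Then there exists a 'reduced' Nullstellensatz certificate with coefficients A', (Q'_i), (Q'_{ij}) for the same identity such that every monomial of A' is square-free and its support is a stable set of G (hence deg(A') ≤ α(G)), and the degree of the reduced certificate is at most d. -/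
open Finset MvPolynomial

/-- A finset of vertices is stable (independent) if no two of its members are adjacent. -/
def IsStableSet {n : ℕ} (G : SimpleGraph (Fin n)) (S : Finset (Fin n)) : Prop :=
  ∀ i ∈ S, ∀ j ∈ S, ¬ G.Adj i j

/-- The stability number `α(G)`: the maximum size of a stable set of `G`. -/
def stabilityNumber {n : ℕ} (G : SimpleGraph (Fin n)) [DecidableRel G.Adj] : ℕ :=
  (Finset.univ.powerset.filter fun S => ∀ i ∈ S, ∀ j ∈ S, ¬ G.Adj i j).sup Finset.card

/-- The Nullstellensatz certificate identity
`1 = A(−(α(G)+r) + Σ x_i) + Σ_i Q_i (x_i² − x_i) + Σ_{{i,j}∈E} Q_{ij} x_i x_j`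
for the non-existence of a stable set of size `α(G) + r`. -/
def IsStableCert {n : ℕ} (G : SimpleGraph (Fin n)) [DecidableRel G.Adj] (r : ℕ)
    (A : MvPolynomial (Fin n) ℂ) (Q : Fin n → MvPolynomial (Fin n) ℂ)
    (Qe : Fin n × Fin n → MvPolynomial (Fin n) ℂ) : Prop :=
  (1 : MvPolynomial (Fin n) ℂ) =
    A * ((∑ i : Fin n, X i) - C ((stabilityNumber G + r : ℕ) : ℂ)) +
    (∑ i : Fin n, Q i * (X i ^ 2 - X i)) +
    ∑ p ∈ edgePairs G, Qe p * (X p.1 * X p.2)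

/-- The degree of a certificate: `max{deg A, deg Q_i, deg Q_{ij}}` (total degrees). -/
def stableCertDeg {n : ℕ} (G : SimpleGraph (Fin n)) [DecidableRel G.Adj]
    (A : MvPolynomial (Fin n) ℂ) (Q : Fin n → MvPolynomial (Fin n) ℂ)
    (Qe : Fin n × Fin n → MvPolynomial (Fin n) ℂ) : ℕ :=
  max A.totalDegree
    (max (Finset.univ.sup fun i => (Q i).totalDegree)
      ((edgePairs G).sup fun p => (Qe p).totalDegree))

/-- A certificate is reduced when every monomial of `A` is square-free and its support
is a stable set of `G`. -/
def IsReducedCoeff {n : ℕ} (G : SimpleGraph (Fin n)) (A : MvPolynomial (Fin n) ℂ) : Prop :=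
  ∀ m ∈ A.support, (∀ i : Fin n, m i ≤ 1) ∧ IsStableSet G m.support

/-- The square-free exponent vector `∏_{v ∈ S} x_v` associated with a finset `S`. -/
noncomputable def expOf {n : ℕ} (S : Finset (Fin n)) : Fin n →₀ ℕ :=
  ∑ v ∈ S, Finsupp.single v 1

namespace StableCertAux

variable {n : ℕ}

/-- degree of an exponent vector -/
def degF (m : Fin n →₀ ℕ) : ℕ := m.sum fun _ e => e

lemma degF_add (a b : Fin n →₀ ℕ) : degF (a + b) = degF a + degF b :=
  Finsupp.sum_add_index' (fun _ => rfl) (fun _ _ _ => rfl)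

lemma degF_single (i : Fin n) (k : ℕ) : degF (Finsupp.single i k) = k := by
  simp [degF]

lemma mem_support_sum {β : Type*} {s : Finset β} {f : β → MvPolynomial (Fin n) ℂ} {t}
    (h : t ∈ (∑ b ∈ s, f b).support) : ∃ b ∈ s, t ∈ (f b).support := by
  by_contra hc; push_neg at hc
  simp only [mem_support_iff, coeff_sum] at h hc
  exact h (Finset.sum_eq_zero fun b hb => not_not.1 (hc b hb))

lemma mem_support_C_mul {q : MvPolynomial (Fin n) ℂ} {c : ℂ} {t}
    (h : t ∈ (C c * q).support) : t ∈ q.support := by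
  simp only [mem_support_iff, coeff_C_mul] at h ⊢
  exact fun h0 => h (by rw [h0, mul_zero])

variable (G : SimpleGraph (Fin n)) [DecidableRel G.Adj]

lemma stable_card_le {S : Finset (Fin n)} (hS : IsStableSet G S) :
    S.card ≤ stabilityNumber G := by
  apply Finset.le_sup (f := Finset.card)
  simp only [Finset.mem_filter, Finset.mem_powerset]
  exact ⟨Finset.subset_univ S, hS⟩

/-- key single-variable reduction identity -/
lemma key_sq (m : Fin n →₀ ℕ) (i : Fin n) (h : 2 ≤ m i) :
    (monomial m 1 : MvPolynomial (Fin n) ℂ) =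
      monomial (m - Finsupp.single i 1) 1 +
        monomial (m - Finsupp.single i 2) 1 * (X i ^ 2 - X i) := by
  have h1 : Finsupp.single i 1 ≤ m := Finsupp.single_le_iff.2 (by omega)
  have h2 : Finsupp.single i 2 ≤ m := Finsupp.single_le_iff.2 h
  have e2 : m - Finsupp.single i 2 + Finsupp.single i 2 = m := tsub_add_cancel_of_le h2
  have e1 : m - Finsupp.single i 2 + Finsupp.single i 1 = m - Finsupp.single i 1 := by
    have : m - Finsupp.single i 2 = m - Finsupp.single i 1 - Finsupp.single i 1 := by
      rw [tsub_tsub, ← Finsupp.single_add]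
    rw [this]
    apply tsub_add_cancel_of_le
    apply Finsupp.single_le_iff.2
    simp only [Finsupp.tsub_apply, Finsupp.single_eq_same]
    omega
  have hX1 : (X i : MvPolynomial (Fin n) ℂ) = monomial (Finsupp.single i 1) 1 := by
    rw [← pow_one (X i), X_pow_eq_monomial]
  rw [mul_sub, X_pow_eq_monomial, hX1, monomial_mul, monomial_mul, mul_one, e2, e1]
  ring

lemma key_edge (m : Fin n →₀ ℕ) (i j : Fin n) (hij : i ≠ j) (hi : 1 ≤ m i) (hj : 1 ≤ m j) :
    (monomial m 1 : MvPolynomial (Fin n) ℂ) =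
      monomial (m - (Finsupp.single i 1 + Finsupp.single j 1)) 1 * (X i * X j) := by
  have hle : Finsupp.single i 1 + Finsupp.single j 1 ≤ m := by
    refine Finsupp.le_def.2 fun k => ?_
    rcases eq_or_ne k i with rfl | hki
    · simp [Finsupp.single_apply, hij.symm, hi]
    rcases eq_or_ne k j with rfl | hkj
    · simp [Finsupp.single_apply, hij, hj, Ne.symm hij]
    · simp [Finsupp.single_apply, Ne.symm hki, Ne.symm hkj]
  have hX : ∀ k : Fin n, (X k : MvPolynomial (Fin n) ℂ) = monomial (Finsupp.single k 1) 1 := by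
    intro k; rw [← pow_one (X k), X_pow_eq_monomial]
  rw [hX, hX, monomial_mul, monomial_mul, mul_one, mul_one, tsub_add_cancel_of_le hle]

/-- Reduction of a single monomial. -/
lemma reduce_mono : ∀ (d : ℕ) (m : Fin n →₀ ℕ), degF m ≤ d →
    ∃ (A' : MvPolynomial (Fin n) ℂ) (B : Fin n → MvPolynomial (Fin n) ℂ)
      (Ce : Fin n × Fin n → MvPolynomial (Fin n) ℂ),
      (monomial m 1 : MvPolynomial (Fin n) ℂ) =
        A' + (∑ i : Fin n, B i * (X i ^ 2 - X i)) +
          ∑ p ∈ edgePairs G, Ce p * (X p.1 * X p.2) ∧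
      IsReducedCoeff G A' ∧
      (∀ t ∈ A'.support, degF t ≤ d) ∧
      (∀ i, ∀ t ∈ (B i).support, degF t + 2 ≤ d) ∧
      (∀ p, ∀ t ∈ (Ce p).support, degF t + 2 ≤ d) := by
  intro d
  induction d with
  | zero =>
    intro m hm
    have hm0 : m = 0 := by
      ext k
      simp only [Finsupp.coe_zero, Pi.zero_apply]
      by_contra hk
      have hks : k ∈ m.support := Finsupp.mem_support_iff.2 hk
      have h2 : m k ≤ ∑ a ∈ m.support, m a :=
        Finset.single_le_sum (f := fun a => m a) (fun _ _ => Nat.zero_le _) hks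
      have hdeg : degF m = ∑ a ∈ m.support, m a := rfl
      omega
    subst hm0
    refine ⟨1, 0, 0, by simp, ?_, ?_, by simp, by simp⟩
    · intro t ht
      have ht0 : t = 0 := by
        rw [mem_support_iff, coeff_one] at ht
        by_contra h
        simp [h] at ht
        exact h ht.symm
      subst ht0
      exact ⟨fun i => by simp, fun i hi => by simp at hi⟩
    · intro t ht
      have ht0 : t = 0 := by
        rw [mem_support_iff, coeff_one] at ht
        by_contra h
        simp [h] at ht
        exact h ht.symm
      simp [ht0, degF]
  | succ d IH =>
    intro m hm
    by_cases h1 : ∃ i, 2 ≤ m i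
    · obtain ⟨i, hi⟩ := h1
      set m1 := m - Finsupp.single i 1 with hm1
      set m2 := m - Finsupp.single i 2 with hm2
      have e2 : m2 + Finsupp.single i 2 = m :=
        tsub_add_cancel_of_le (Finsupp.single_le_iff.2 hi)
      have e1 : m1 + Finsupp.single i 1 = m :=
        tsub_add_cancel_of_le (Finsupp.single_le_iff.2 (by omega))
      have hd2 : degF m2 + 2 = degF m := by
        conv_rhs => rw [← e2]
        rw [degF_add, degF_single]
      have hd1 : degF m1 + 1 = degF m := by
        conv_rhs => rw [← e1]
        rw [degF_add, degF_single]
      obtain ⟨A', B, Ce, heq, hred, hA'd, hBd, hCed⟩ := IH m1 (by omega)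
      refine ⟨A', fun j => B j + if j = i then monomial m2 1 else 0, Ce, ?_, hred,
        fun t ht => Nat.le_succ_of_le (hA'd t ht), ?_, fun p t ht => Nat.le_succ_of_le (hCed p t ht)⟩
      · have hsum : (∑ j : Fin n, (B j + if j = i then monomial m2 1 else 0) * (X j ^ 2 - X j))
            = (∑ j : Fin n, B j * (X j ^ 2 - X j)) + monomial m2 1 * (X i ^ 2 - X i) := by
          rw [Finset.sum_congr rfl (fun j _ => add_mul (B j) _ _), Finset.sum_add_distrib]
          congr 1
          rw [Finset.sum_congr rfl (fun j (_ : j ∈ Finset.univ) => by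
              rw [ite_mul, zero_mul] :
              ∀ j ∈ Finset.univ, (if j = i then (monomial m2 1 : MvPolynomial (Fin n) ℂ) else 0) * (X j ^ 2 - X j)
                = if j = i then monomial m2 1 * (X j ^ 2 - X j) else 0),
            Finset.sum_ite_eq' Finset.univ i (fun j => (monomial m2 1 : MvPolynomial (Fin n) ℂ) * (X j ^ 2 - X j))]
          simp
        rw [hsum, key_sq m i hi, heq]
        ring
      · intro j t ht
        rcases eq_or_ne j i with rfl | hji
        · have := support_add ht
          rw [Finset.mem_union] at this
          rcases this with h | h
          · exact Nat.le_succ_of_le (hBd j t h)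
          · rw [if_pos rfl] at h
            have : t = m2 := by simpa using support_monomial_subset h
            subst this
            omega
        · simp only [if_neg hji, add_zero] at ht
          exact Nat.le_succ_of_le (hBd j t ht)
    · push_neg at h1
      by_cases h2 : IsStableSet G m.support
      · refine ⟨monomial m 1, 0, 0, by simp, ?_, ?_, by simp, by simp⟩
        · intro t ht
          have : t = m := by simpa using support_monomial_subset ht
          subst this
          exact ⟨fun i => by have := h1 i; omega, h2⟩
        · intro t ht
          have : t = m := by simpa using support_monomial_subset ht
          subst this
          exact hm
      · rw [IsStableSet] at h2
        push_neg at h2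
        obtain ⟨i, hi, j, hj, hadj⟩ := h2
        have hne : i ≠ j := hadj.ne
        have hmi : 1 ≤ m i := by
          have := Finsupp.mem_support_iff.1 hi; omega
        have hmj : 1 ≤ m j := by
          have := Finsupp.mem_support_iff.1 hj; omega
        -- orient the edge
        obtain ⟨a, b, hab, hadj', ha, hb⟩ :
            ∃ a b : Fin n, a < b ∧ G.Adj a b ∧ 1 ≤ m a ∧ 1 ≤ m b := by
          rcases lt_or_gt_of_ne hne with h | h
          · exact ⟨i, j, h, hadj, hmi, hmj⟩
          · exact ⟨j, i, h, hadj.symm, hmj, hmi⟩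
        have hpmem : (a, b) ∈ edgePairs G := by
          simp [edgePairs, hab, hadj']
        set m' := m - (Finsupp.single a 1 + Finsupp.single b 1) with hm'
        have hd' : degF m' + 2 = degF m := by
          have hle : Finsupp.single a 1 + Finsupp.single b 1 ≤ m := by
            refine Finsupp.le_def.2 fun k => ?_
            rcases eq_or_ne k a with rfl | hka
            · simp [Finsupp.single_apply, hab.ne', ha]
            rcases eq_or_ne k b with rfl | hkb
            · simp [Finsupp.single_apply, hab.ne, hb, Ne.symm hka]
            · simp [Finsupp.single_apply, Ne.symm hka, Ne.symm hkb]
          conv_rhs => rw [← tsub_add_cancel_of_le hle]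
          rw [degF_add, degF_add, degF_single, degF_single]
        refine ⟨0, 0, fun p => if p = (a, b) then monomial m' 1 else 0, ?_, ?_, by simp, by simp, ?_⟩
        · have hs : (∑ p ∈ edgePairs G,
              (if p = (a, b) then (monomial m' 1 : MvPolynomial (Fin n) ℂ) else 0) * (X p.1 * X p.2))
              = monomial m' 1 * (X a * X b) := by
            rw [Finset.sum_congr rfl (fun p (_ : p ∈ edgePairs G) => by
                rw [ite_mul, zero_mul] :
                ∀ p ∈ edgePairs G,
                  (if p = (a, b) then (monomial m' 1 : MvPolynomial (Fin n) ℂ) else 0) * (X p.1 * X p.2)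
                    = if p = (a, b) then monomial m' 1 * (X p.1 * X p.2) else 0),
              Finset.sum_ite_eq' (edgePairs G) ((a, b) : Fin n × Fin n)
                (fun p => (monomial m' 1 : MvPolynomial (Fin n) ℂ) * (X p.1 * X p.2)),
              if_pos hpmem]
          rw [hs]
          simpa using key_edge m a b hab.ne ha hb
        · intro t ht; simp at ht
        · intro p t ht
          rcases eq_or_ne p (a, b) with rfl | hp
          · simp only [if_pos rfl] at ht
            have : t = m' := by simpa using support_monomial_subset ht
            subst this
            omega
          · simp only [if_neg hp] at ht
            simp at ht

end StableCertAux

namespace StableCertAux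

variable {n : ℕ} (G : SimpleGraph (Fin n)) [DecidableRel G.Adj]

lemma reduce_poly (A : MvPolynomial (Fin n) ℂ) :
    ∃ (A' : MvPolynomial (Fin n) ℂ) (B : Fin n → MvPolynomial (Fin n) ℂ)
      (Ce : Fin n × Fin n → MvPolynomial (Fin n) ℂ),
      A = A' + (∑ i : Fin n, B i * (X i ^ 2 - X i)) +
          ∑ p ∈ edgePairs G, Ce p * (X p.1 * X p.2) ∧
      IsReducedCoeff G A' ∧
      (∀ t ∈ A'.support, degF t ≤ A.totalDegree) ∧
      (∀ i, ∀ t ∈ (B i).support, degF t + 2 ≤ A.totalDegree) ∧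
      (∀ p, ∀ t ∈ (Ce p).support, degF t + 2 ≤ A.totalDegree) := by
  have h : ∀ m : Fin n →₀ ℕ, ∃ (A' : MvPolynomial (Fin n) ℂ)
      (B : Fin n → MvPolynomial (Fin n) ℂ) (Ce : Fin n × Fin n → MvPolynomial (Fin n) ℂ),
      (monomial m 1 : MvPolynomial (Fin n) ℂ) =
        A' + (∑ i : Fin n, B i * (X i ^ 2 - X i)) +
          ∑ p ∈ edgePairs G, Ce p * (X p.1 * X p.2) ∧
      IsReducedCoeff G A' ∧
      (∀ t ∈ A'.support, degF t ≤ degF m) ∧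
      (∀ i, ∀ t ∈ (B i).support, degF t + 2 ≤ degF m) ∧
      (∀ p, ∀ t ∈ (Ce p).support, degF t + 2 ≤ degF m) :=
    fun m => reduce_mono G (degF m) m le_rfl
  choose f B g heq hred hfd hBd hgd using h
  have hmemdeg : ∀ m ∈ A.support, degF m ≤ A.totalDegree := fun m hm => le_totalDegree hm
  refine ⟨∑ m ∈ A.support, C (A.coeff m) * f m,
    fun i => ∑ m ∈ A.support, C (A.coeff m) * B m i,
    fun p => ∑ m ∈ A.support, C (A.coeff m) * g m p, ?_, ?_, ?_, ?_, ?_⟩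
  · have expand : A = ∑ m ∈ A.support, C (A.coeff m) *
        ((f m) + (∑ i : Fin n, B m i * (X i ^ 2 - X i)) +
          ∑ p ∈ edgePairs G, g m p * (X p.1 * X p.2)) := by
      conv_lhs => rw [A.as_sum]
      refine Finset.sum_congr rfl fun m _ => ?_
      rw [← heq m, C_mul_monomial, mul_one]
    have hswap1 : ∑ m ∈ A.support, C (A.coeff m) * (∑ i : Fin n, B m i * (X i ^ 2 - X i))
        = ∑ i : Fin n, (∑ m ∈ A.support, C (A.coeff m) * B m i) * (X i ^ 2 - X i) := by
      simp only [Finset.mul_sum]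
      rw [Finset.sum_comm]
      refine Finset.sum_congr rfl fun i _ => ?_
      rw [Finset.sum_mul]
      exact Finset.sum_congr rfl fun m _ => (mul_assoc _ _ _).symm
    have hswap2 : ∑ m ∈ A.support, C (A.coeff m) * (∑ p ∈ edgePairs G, g m p * (X p.1 * X p.2))
        = ∑ p ∈ edgePairs G, (∑ m ∈ A.support, C (A.coeff m) * g m p) * (X p.1 * X p.2) := by
      simp only [Finset.mul_sum]
      rw [Finset.sum_comm]
      refine Finset.sum_congr rfl fun p _ => ?_
      rw [Finset.sum_mul]
      exact Finset.sum_congr rfl fun m _ => (mul_assoc _ _ _).symm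
    show A = (∑ m ∈ A.support, C (A.coeff m) * f m) +
        (∑ i : Fin n, (∑ m ∈ A.support, C (A.coeff m) * B m i) * (X i ^ 2 - X i)) +
        ∑ p ∈ edgePairs G, (∑ m ∈ A.support, C (A.coeff m) * g m p) * (X p.1 * X p.2)
    rw [← hswap1, ← hswap2, ← Finset.sum_add_distrib, ← Finset.sum_add_distrib]
    conv_lhs => rw [expand]
    exact Finset.sum_congr rfl fun m _ => by rw [mul_add, mul_add]
  · intro t ht
    obtain ⟨m, hm, htm⟩ := mem_support_sum ht
    exact hred m t (mem_support_C_mul htm)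
  · intro t ht
    obtain ⟨m, hm, htm⟩ := mem_support_sum ht
    exact le_trans (hfd m t (mem_support_C_mul htm)) (hmemdeg m hm)
  · intro i t ht
    obtain ⟨m, hm, htm⟩ := mem_support_sum ht
    exact le_trans (hBd m i t (mem_support_C_mul htm)) (hmemdeg m hm)
  · intro p t ht
    obtain ⟨m, hm, htm⟩ := mem_support_sum ht
    exact le_trans (hgd m p t (mem_support_C_mul htm)) (hmemdeg m hm)

end StableCertAux

open StableCertAux

/-- From any Nullstellensatz certificate of degree `d` for the
non-existence of a stable set of size `α(G) + r`, one can construct a reduced certificate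
`A', Q'_i, Q'_{ij}` for the same identity in which every monomial of `A'` is square-free
with support a stable set of `G` (hence `deg A' ≤ α(G)`), of degree at most `d`. -/
theorem exists_reduced_stable_certificate (n : ℕ) (G : SimpleGraph (Fin n))
    [DecidableRel G.Adj] (r : ℕ) (hr : 1 ≤ r)
    (A : MvPolynomial (Fin n) ℂ) (Q : Fin n → MvPolynomial (Fin n) ℂ)
    (Qe : Fin n × Fin n → MvPolynomial (Fin n) ℂ)
    (hcert : IsStableCert G r A Q Qe) :
    ∃ (A' : MvPolynomial (Fin n) ℂ) (Q' : Fin n → MvPolynomial (Fin n) ℂ)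
      (Qe' : Fin n × Fin n → MvPolynomial (Fin n) ℂ),
      IsStableCert G r A' Q' Qe' ∧
      IsReducedCoeff G A' ∧
      A'.totalDegree ≤ stabilityNumber G ∧
      stableCertDeg G A' Q' Qe' ≤ stableCertDeg G A Q Qe := by
  classical
  obtain ⟨A', B, Ce, hAeq, hred, hA'd, hBd, hCd⟩ := reduce_poly G A
  set ℓ : MvPolynomial (Fin n) ℂ :=
    (∑ i : Fin n, X i) - C ((stabilityNumber G + r : ℕ) : ℂ) with hℓ
  have hℓdeg : ℓ.totalDegree ≤ 1 := by
    rw [hℓ, sub_eq_add_neg]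
    refine le_trans (totalDegree_add _ _) (max_le ?_ ?_)
    · exact le_trans (totalDegree_finset_sum _ _)
        (Finset.sup_le fun i _ => le_of_eq (totalDegree_X i))
    · rw [totalDegree_neg, totalDegree_C]; omega
  refine ⟨A', fun i => Q i + B i * ℓ, fun p => Qe p + Ce p * ℓ, ?_, hred, ?_, ?_⟩
  · have key : A' * ℓ + (∑ i : Fin n, (Q i + B i * ℓ) * (X i ^ 2 - X i)) +
        ∑ p ∈ edgePairs G, (Qe p + Ce p * ℓ) * (X p.1 * X p.2)
        = A * ℓ + (∑ i : Fin n, Q i * (X i ^ 2 - X i)) +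
          ∑ p ∈ edgePairs G, Qe p * (X p.1 * X p.2) := by
      rw [hAeq, add_mul, add_mul]
      rw [Finset.sum_congr rfl (fun i (_ : i ∈ Finset.univ) =>
        add_mul (Q i) (B i * ℓ) (X i ^ 2 - X i)), Finset.sum_add_distrib]
      rw [Finset.sum_congr rfl (fun p (_ : p ∈ edgePairs G) =>
        add_mul (Qe p) (Ce p * ℓ) (X p.1 * X p.2)), Finset.sum_add_distrib]
      rw [Finset.sum_mul, Finset.sum_mul]
      rw [Finset.sum_congr rfl (fun i (_ : i ∈ Finset.univ) => by ring :
        ∀ i ∈ Finset.univ, B i * (X i ^ 2 - X i) * ℓ = B i * ℓ * (X i ^ 2 - X i))]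
      rw [Finset.sum_congr rfl (fun p (_ : p ∈ edgePairs G) => by ring :
        ∀ p ∈ edgePairs G, Ce p * (X p.1 * X p.2) * ℓ = Ce p * ℓ * (X p.1 * X p.2))]
      ring
    unfold IsStableCert at hcert ⊢
    rw [← hℓ] at hcert ⊢
    exact hcert.trans key.symm
  · have hb : ∀ m ∈ A'.support, (m.sum fun _ e => e) ≤ stabilityNumber G := by
      intro m hm
      obtain ⟨hsq, hst⟩ := hred m hm
      calc (m.sum fun _ e => e) = ∑ a ∈ m.support, m a := rfl
        _ ≤ ∑ a ∈ m.support, 1 := Finset.sum_le_sum fun a _ => hsq a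
        _ = m.support.card := by simp
        _ ≤ stabilityNumber G := stable_card_le G hst
    exact Finset.sup_le hb
  · have hdegA' : A'.totalDegree ≤ A.totalDegree := Finset.sup_le hA'd
    have hmul : ∀ (q : MvPolynomial (Fin n) ℂ),
        (∀ t ∈ q.support, degF t + 2 ≤ A.totalDegree) → (q * ℓ).totalDegree ≤ A.totalDegree := by
      intro q hq
      rcases eq_or_ne q 0 with rfl | hne
      · simp
      · have hsupp : q.support.Nonempty := by
          rw [Finset.nonempty_iff_ne_empty]
          simpa [MvPolynomial.support_eq_empty] using hne
        obtain ⟨t, htm, hts⟩ := Finset.exists_mem_eq_sup q.support hsupp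
          (fun t => t.sum fun _ e => e)
        have hqd : q.totalDegree + 2 ≤ A.totalDegree := by
          have := hq t htm
          rw [totalDegree, hts]
          exact this
        calc (q * ℓ).totalDegree ≤ q.totalDegree + ℓ.totalDegree := totalDegree_mul _ _
          _ ≤ A.totalDegree := by omega
    have hAD : A.totalDegree ≤ stableCertDeg G A Q Qe := le_max_left _ _
    have hQD : ∀ i : Fin n, (Q i).totalDegree ≤ stableCertDeg G A Q Qe := fun i => by
      unfold stableCertDeg
      exact le_trans (Finset.le_sup (f := fun i => (Q i).totalDegree) (Finset.mem_univ i))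
        (le_trans (le_max_left _ _) (le_max_right _ _))
    have hQeD : ∀ p ∈ edgePairs G, (Qe p).totalDegree ≤ stableCertDeg G A Q Qe := fun p hp => by
      unfold stableCertDeg
      exact le_trans (Finset.le_sup (f := fun p => (Qe p).totalDegree) hp)
        (le_trans (le_max_right _ _) (le_max_right _ _))
    show max A'.totalDegree (max (Finset.univ.sup fun i => (Q i + B i * ℓ).totalDegree)
        ((edgePairs G).sup fun p => (Qe p + Ce p * ℓ).totalDegree)) ≤ stableCertDeg G A Q Qe
    refine max_le (le_trans hdegA' hAD) (max_le (Finset.sup_le fun i _ => ?_)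
      (Finset.sup_le fun p hp => ?_))
    · exact le_trans (totalDegree_add _ _)
        (max_le (hQD i) (le_trans (hmul (B i) (hBd i)) hAD))
    · exact le_trans (totalDegree_add _ _)
        (max_le (hQeD p hp) (le_trans (hmul (Ce p) (hCd p)) hAD))
end

section
/- Let G be a finite simple graph with vertex set V = {1,…,n}, edge set E, and stability number α(G), let r ≥ 1, and let A, (Q_i), (Q_{ij}) be a Nullstellensatz certificate 1 = A·(−(α(G)+r) + Σ_{i=1}^n x_i) + Σ_{i∈V} Q_i·(x_i² − x_i) + Σ_{{i,j}∈E} Q_{ij}·x_i·x_j that is reduced, i.e., every monomial of A is square-free with support a stable set of G. Then for every maximal stable set M = {d_1,…,d_{|M|}} of G and every i ∈ {1,…,|M|}, the linear monomial x_{d_i} appears in A with a non-zero coefficient. -/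
open Finset MvPolynomial

/-! Evaluate the certificate identity at `0` and at the unit vector `e_v`: the boolean and edge
terms vanish at both points, leaving `A(0) · (-k) = 1` and `A(e_v) · (1 - k) = 1` with
`k = α(G) + r`. Since `A` is square-free, `A(e_v) = A(0) + a_v`, where `a_v` is the coefficient
of `x_v`; so `a_v = 0` would give `A(0) · (-k) = A(0) · (1 - k) = 1`, which is impossible. -/

lemma Finsupp.eq_zero_or_eq_single_one_of_support_subset {σ : Type*} {m : σ →₀ ℕ} {v : σ}
    (hm : m.support ⊆ {v}) (hv : m v ≤ 1) : m = 0 ∨ m = Finsupp.single v 1 := by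
  rw [Finsupp.support_subset_singleton.mp hm]
  interval_cases m v <;> simp

namespace Pi

variable {ι R : Type*} [DecidableEq ι] [MonoidWithZero R]

lemma single_one_sq (v i : ι) : (Pi.single v 1 : ι → R) i ^ 2 = (Pi.single v 1 : ι → R) i := by
  rcases eq_or_ne i v with rfl | h
  · simp
  · simp [Pi.single_eq_of_ne h]

lemma single_mul_single_eq_zero_of_ne (v : ι) (x : R) {i j : ι} (h : i ≠ j) :
    (Pi.single v x : ι → R) i * (Pi.single v x : ι → R) j = 0 := by
  rcases eq_or_ne i v with rfl | hi
  · rw [Pi.single_eq_of_ne h.symm, mul_zero]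
  · rw [Pi.single_eq_of_ne hi, zero_mul]

end Pi

namespace MvPolynomial

variable {σ R : Type*} [CommSemiring R] [DecidableEq σ]

lemma prod_pi_single_one_pow (m : σ →₀ ℕ) (v : σ) :
    ∏ i ∈ m.support, (Pi.single v 1 : σ → R) i ^ m i = if m.support ⊆ {v} then 1 else 0 := by
  split_ifs with hm
  · refine Finset.prod_eq_one fun i hi => ?_
    rw [Finset.mem_singleton.mp (hm hi), Pi.single_eq_same, one_pow]
  · obtain ⟨i, hi, hiv⟩ := Finset.not_subset.mp hm
    refine Finset.prod_eq_zero hi ?_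
    rw [Pi.single_eq_of_ne (Finset.notMem_singleton.mp hiv),
      zero_pow (Finsupp.mem_support_iff.mp hi)]

lemma eval_pi_single_one (p : MvPolynomial σ R) (v : σ) :
    eval (Pi.single v 1) p = ∑ m ∈ p.support with m.support ⊆ {v}, coeff m p := by
  simp only [eval_eq, prod_pi_single_one_pow, mul_ite, mul_one, mul_zero, Finset.sum_filter]

lemma eval_pi_single_one_of_le_one {p : MvPolynomial σ R} {v : σ}
    (hp : ∀ m ∈ p.support, m v ≤ 1) :
    eval (Pi.single v 1) p = coeff 0 p + coeff (Finsupp.single v 1) p := by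
  have hne : (0 : σ →₀ ℕ) ≠ Finsupp.single v 1 := (Finsupp.single_ne_zero.mpr one_ne_zero).symm
  rw [eval_pi_single_one, ← Finset.sum_pair (f := fun m => coeff m p) hne]
  refine Finset.sum_subset (fun m hm => ?_) (fun m hm hmp => ?_)
  · obtain ⟨hmp, hmv⟩ := Finset.mem_filter.mp hm
    simpa using Finsupp.eq_zero_or_eq_single_one_of_support_subset hmv (hp m hmp)
  · refine notMem_support_iff.mp fun hmp' => hmp (Finset.mem_filter.mpr ⟨hmp', ?_⟩)
    rcases Finset.mem_insert.mp hm with rfl | hm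
    · simp
    · rw [Finset.mem_singleton.mp hm]
      exact Finsupp.support_single_subset

end MvPolynomial

lemma IsStableCert.eval_mul_eq_one {n : ℕ} {G : SimpleGraph (Fin n)} [DecidableRel G.Adj]
    {r : ℕ} {A : MvPolynomial (Fin n) ℂ} {Q : Fin n → MvPolynomial (Fin n) ℂ}
    {Qe : Fin n × Fin n → MvPolynomial (Fin n) ℂ} (hcert : IsStableCert G r A Q Qe)
    (x : Fin n → ℂ) (hbool : ∀ i, x i ^ 2 = x i) (hedge : ∀ p ∈ edgePairs G, x p.1 * x p.2 = 0) :
    eval x A * (∑ i, x i - (stabilityNumber G + r : ℕ)) = 1 := by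
  have := congrArg (eval x) hcert
  simp only [map_add, map_mul, map_sub, map_sum, map_pow, eval_X, eval_C, map_one, hbool,
    sub_self, mul_zero, Finset.sum_const_zero, add_zero] at this
  rw [Finset.sum_eq_zero (s := edgePairs G) fun p hp => by rw [hedge p hp, mul_zero],
    add_zero] at this
  exact this.symm

theorem linear_term_appears_in_reduced_certificate_general (n : ℕ) (G : SimpleGraph (Fin n))
    [DecidableRel G.Adj] (r : ℕ)
    (A : MvPolynomial (Fin n) ℂ) (Q : Fin n → MvPolynomial (Fin n) ℂ)
    (Qe : Fin n × Fin n → MvPolynomial (Fin n) ℂ)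
    (hcert : IsStableCert G r A Q Qe) (hred : IsReducedCoeff G A)
    (M : Finset (Fin n)) :
    ∀ v ∈ M, MvPolynomial.coeff (Finsupp.single v 1) A ≠ 0 := by
  intro v _ hv
  set k : ℂ := ((stabilityNumber G + r : ℕ) : ℂ)
  have h0 : coeff 0 A * (0 - k) = 1 := by
    have := hcert.eval_mul_eq_one 0 (by simp) (by simp)
    simpa only [eval_zero, constantCoeff_eq, Pi.zero_apply, Finset.sum_const_zero] using this
  have h1 : coeff 0 A * (1 - k) = 1 := by
    have := hcert.eval_mul_eq_one (Pi.single v 1) (Pi.single_one_sq v) fun p hp =>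
      Pi.single_mul_single_eq_zero_of_ne v 1 (Finset.mem_filter.mp hp).2.1.ne
    rwa [eval_pi_single_one_of_le_one (fun m hm => (hred m hm).1 v), hv, add_zero,
      Finset.sum_pi_single', if_pos (Finset.mem_univ v)] at this
  exact one_ne_zero (by linear_combination (k - 1) * h0 - k * h1)

/-- In a reduced Nullstellensatz certificate for the non-existence of a
stable set of size `α(G) + r`, the linear monomial `x_v` appears with non-zero coefficient
in `A` for every member `v` of any maximal stable set `M` of `G`. -/
theorem linear_term_appears_in_reduced_certificate (n : ℕ) (G : SimpleGraph (Fin n))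
    [DecidableRel G.Adj] (r : ℕ) (hr : 1 ≤ r)
    (A : MvPolynomial (Fin n) ℂ) (Q : Fin n → MvPolynomial (Fin n) ℂ)
    (Qe : Fin n × Fin n → MvPolynomial (Fin n) ℂ)
    (hcert : IsStableCert G r A Q Qe) (hred : IsReducedCoeff G A)
    (M : Finset (Fin n)) (hM : IsStableSet G M)
    (hmax : ∀ S : Finset (Fin n), IsStableSet G S → M ⊆ S → S = M) :
    ∀ v ∈ M, MvPolynomial.coeff (Finsupp.single v 1) A ≠ 0 :=
  linear_term_appears_in_reduced_certificate_general n G r A Q Qe hcert hred M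
end

section
/- Let G be a finite simple graph with vertex set V = {1,…,n}, edge set E, and stability number α(G), let r ≥ 1, and let A, (Q_i), (Q_{ij}) be a reduced Nullstellensatz certificate 1 = A·(−(α(G)+r) + Σ_{i=1}^n x_i) + Σ_{i∈V} Q_i·(x_i² − x_i) + Σ_{{i,j}∈E} Q_{ij}·x_i·x_j (every monomial of A is square-free with support a stable set of G). Let M be a maximal stable set of G and let {c_1,…,c_{k+1}} be any (k+1)-element subset of M with k < |M|. If the monomial x_{c_1}·x_{c_2}·⋯·x_{c_k} appears in A with a non-zero coefficient, then the monomial x_{c_1}·x_{c_2}·⋯·x_{c_k}·x_{c_{k+1}} also appears in A with a non-zero coefficient. -/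
open Finset MvPolynomial

/-! Evaluating the certificate at the indicator vector `1_W` of a stable set `W` kills the
Boolean and edge terms, so `A(1_W) = 1 / (|W| - α(G) - r)`. A square-free polynomial is
recovered from its values on `{0,1}ⁿ` by Möbius inversion,
`coeff_U A = Σ_{W ⊆ U} (-1)^{|U \ W|} A(1_W)`, and since `A(1_W)` depends only on `|W|` this is
the `k`-th forward difference of `y ↦ 1/y` at `-(α(G) + r)`, where `k = |U|`. That difference is
`(-1)^k k! / ∏_{j ≤ k} (j - α(G) - r)`, which is non-zero because `k ≤ α(G) < α(G) + r`. -/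

open fwdDiff

theorem Finset.sum_Icc_neg_one_pow_card_sdiff {α R : Type*} [DecidableEq α] [Ring R]
    {S U : Finset α} (hSU : S ⊆ U) :
    ∑ W ∈ Icc S U, (-1 : R) ^ #(U \ W) = if S = U then 1 else 0 := by
  have hreflect : ∑ W ∈ Icc S U, (-1 : R) ^ #(U \ W) = ∑ Y ∈ (U \ S).powerset, (-1 : R) ^ #Y := by
    refine sum_nbij' (U \ ·) (U \ ·) ?_ ?_ ?_ ?_ fun _ _ => rfl
    · intro W hW
      rw [mem_Icc] at hW
      exact mem_powerset.mpr (sdiff_subset_sdiff le_rfl hW.1)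
    · intro Y hY
      have := sdiff_subset_sdiff (le_refl U) (mem_powerset.mp hY)
      rw [sdiff_sdiff_eq_self hSU] at this
      exact mem_Icc.mpr ⟨this, sdiff_subset⟩
    · intro W hW
      exact sdiff_sdiff_eq_self (mem_Icc.mp hW).2
    · intro Y hY
      exact sdiff_sdiff_eq_self ((mem_powerset.mp hY).trans sdiff_subset)
  have hcast := congrArg (Int.cast : ℤ → R) (sum_powerset_neg_one_pow_card (x := U \ S))
  push_cast at hcast
  rw [hreflect, hcast]
  exact if_congr (sdiff_eq_empty_iff_subset.trans ⟨hSU.antisymm, fun h => h ▸ le_rfl⟩) rfl rfl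

theorem Finset.sum_powerset_neg_one_pow_card_sdiff_mul_sum_powerset {α R : Type*}
    [DecidableEq α] [CommRing R] (f : Finset α → R) (U : Finset α) :
    ∑ W ∈ U.powerset, (-1 : R) ^ #(U \ W) * ∑ S ∈ W.powerset, f S = f U := by
  simp_rw [mul_sum]
  rw [sum_comm' (t' := U.powerset) (s' := fun S => Icc S U) (fun W S => by
    simp only [mem_powerset, mem_Icc]
    exact ⟨fun ⟨h₁, h₂⟩ => ⟨⟨h₂, h₁⟩, h₂.trans h₁⟩, fun ⟨⟨h₁, h₂⟩, _⟩ => ⟨h₂, h₁⟩⟩)]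
  simp_rw [← sum_mul]
  rw [sum_eq_single_of_mem U (mem_powerset_self U) fun S hS hSU => by
    rw [sum_Icc_neg_one_pow_card_sdiff (mem_powerset.mp hS), if_neg hSU, zero_mul]]
  rw [sum_Icc_neg_one_pow_card_sdiff le_rfl, if_pos rfl, one_mul]

theorem fwdDiff_iter_eq_sum_powerset {α M G : Type*} [DecidableEq α] [AddCommMonoid M]
    [AddCommGroup G] (f : M → G) (y h : M) (U : Finset α) :
    (Δ_[h])^[#U] f y = ∑ W ∈ U.powerset, (-1 : ℤ) ^ #(U \ W) • f (y + #W • h) := by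
  calc (Δ_[h])^[#U] f y
      = ∑ j ∈ range (#U + 1), (#U).choose j • (-1 : ℤ) ^ (#U - j) • f (y + j • h) := by
        rw [fwdDiff_iter_eq_sum_shift]
        refine sum_congr rfl fun j _ => ?_
        rw [mul_comm, mul_smul, natCast_zsmul]
    _ = ∑ W ∈ U.powerset, (-1 : ℤ) ^ (#U - #W) • f (y + #W • h) :=
        (sum_powerset_apply_card fun j => (-1 : ℤ) ^ (#U - j) • f (y + j • h)).symm
    _ = ∑ W ∈ U.powerset, (-1 : ℤ) ^ #(U \ W) • f (y + #W • h) :=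
        sum_congr rfl fun W hW => by rw [card_sdiff_of_subset (mem_powerset.mp hW)]

theorem fwdDiff_iter_inv {K : Type*} [Field K] (k : ℕ) (x : K) (hx : ∀ j ≤ k, x + j ≠ 0) :
    (Δ_[1])^[k] (fun y : K => y⁻¹) x = (-1) ^ k * k.factorial / ∏ j ∈ range (k + 1), (x + j) := by
  induction k generalizing x with
  | zero => simp
  | succ k ih =>
    have hx' : ∀ j ≤ k, x + 1 + j ≠ 0 := fun j hj => by
      simpa [add_assoc, add_comm (1 : K)] using hx (j + 1) (by omega)
    rw [Function.iterate_succ_apply', fwdDiff, ih x fun j hj => hx j (by omega), ih (x + 1) hx']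
    set D := ∏ j ∈ range k, (x + 1 + j) with hD
    have hprod_shift : ∏ j ∈ range (k + 1), (x + 1 + j) = D * (x + 1 + k) := prod_range_succ _ _
    have hprod_left : ∏ j ∈ range (k + 1), (x + j) = x * D := by
      rw [prod_range_succ', mul_comm]; simp [hD, add_assoc, add_comm (1 : K)]
    have hprod_succ : ∏ j ∈ range (k + 1 + 1), (x + j) = x * D * (x + 1 + k) := by
      rw [prod_range_succ, hprod_left, Nat.cast_succ, add_comm (k : K) 1, add_assoc]
    have h0 : x ≠ 0 := by simpa using hx 0 (by omega)
    have hk : x + 1 + k ≠ 0 := by simpa [add_assoc, add_comm (1 : K)] using hx (k + 1) le_rfl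
    have hD0 : D ≠ 0 := prod_ne_zero_iff.mpr fun j hj => hx' j (by simp at hj; omega)
    -- `1 / (D (x + 1 + k)) - 1 / (x D) = -(k + 1) / (x D (x + 1 + k))`
    rw [hprod_shift, hprod_left, hprod_succ, Nat.factorial_succ]
    field_simp
    push_cast
    ring

theorem fwdDiff_iter_inv_ne_zero {K : Type*} [Field K] [CharZero K] (k : ℕ) (x : K)
    (hx : ∀ j ≤ k, x + j ≠ 0) : (Δ_[1])^[k] (fun y : K => y⁻¹) x ≠ 0 := by
  rw [fwdDiff_iter_inv k x hx]
  exact div_ne_zero (mul_ne_zero (pow_ne_zero _ (by norm_num))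
    (Nat.cast_ne_zero.mpr (Nat.factorial_ne_zero _)))
    (prod_ne_zero_iff.mpr fun j hj => hx j (Nat.lt_succ_iff.mp (mem_range.mp hj)))

section SquareFree

variable {n : ℕ} {R : Type*} [CommRing R]

theorem expOf_apply (S : Finset (Fin n)) (i : Fin n) : expOf S i = if i ∈ S then 1 else 0 := by
  simp [expOf, Finsupp.finsetSum_apply, Finsupp.single_apply]

theorem support_expOf (S : Finset (Fin n)) : (expOf S).support = S := by
  ext i
  simp [expOf_apply]

theorem expOf_support_of_le_one {d : Fin n →₀ ℕ} (hd : ∀ i, d i ≤ 1) : expOf d.support = d := by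
  ext i
  have := hd i
  rw [expOf_apply]
  by_cases h : d i = 0 <;> simp [h]
  omega

theorem eval_indicator_eq_sum_powerset_coeff_expOf {A : MvPolynomial (Fin n) R}
    (hA : ∀ m ∈ A.support, ∀ i, m i ≤ 1) (W : Finset (Fin n)) :
    eval ((W : Set (Fin n)).indicator 1) A = ∑ S ∈ W.powerset, coeff (expOf S) A := by
  have hmonomial : ∀ d : Fin n →₀ ℕ, ∏ i ∈ d.support, (W : Set (Fin n)).indicator 1 i ^ d i =
      if d.support ⊆ W then (1 : R) else 0 := by
    intro d
    split_ifs with hd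
    · exact prod_eq_one fun i hi => by simp [Set.indicator_of_mem (mem_coe.mpr (hd hi))]
    · obtain ⟨i, hi, hiW⟩ := not_subset.mp hd
      exact prod_eq_zero hi (by
        simp [Set.indicator_of_notMem (mt mem_coe.mp hiW), Finsupp.mem_support_iff.mp hi])
  simp_rw [eval_eq, hmonomial, mul_ite, mul_one, mul_zero]
  refine sum_bij_ne_zero (fun d _ _ => d.support) ?_ ?_ ?_ ?_
  · intro d _ hd
    exact mem_powerset.mpr (of_not_not fun h => hd (if_neg h))
  · intro d₁ hd₁ _ d₂ hd₂ _ h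
    rw [← expOf_support_of_le_one (hA d₁ hd₁), ← expOf_support_of_le_one (hA d₂ hd₂), h]
  · intro S hS hcoeff
    refine ⟨expOf S, mem_support_iff.mpr hcoeff, ?_, support_expOf S⟩
    rwa [support_expOf, if_pos (mem_powerset.mp hS)]
  · intro d hd hne
    rw [if_pos (of_not_not fun h => hne (if_neg h)), expOf_support_of_le_one (hA d hd)]

theorem coeff_expOf_eq_sum_powerset_eval_indicator {A : MvPolynomial (Fin n) R}
    (hA : ∀ m ∈ A.support, ∀ i, m i ≤ 1) (U : Finset (Fin n)) :
    coeff (expOf U) A =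
      ∑ W ∈ U.powerset, (-1 : R) ^ #(U \ W) * eval ((W : Set (Fin n)).indicator 1) A := by
  simp_rw [eval_indicator_eq_sum_powerset_coeff_expOf (R := R) hA]
  exact (sum_powerset_neg_one_pow_card_sdiff_mul_sum_powerset (fun S => coeff (expOf S) A) U).symm

end SquareFree

section StableSets

variable {n : ℕ} {G : SimpleGraph (Fin n)}

theorem IsStableSet.mono {S T : Finset (Fin n)} (hT : IsStableSet G T) (hST : S ⊆ T) :
    IsStableSet G S :=
  fun i hi j hj => hT i (hST hi) j (hST hj)

theorem IsStableSet.card_le_stabilityNumber [DecidableRel G.Adj] {S : Finset (Fin n)}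
    (hS : IsStableSet G S) : #S ≤ stabilityNumber G :=
  le_sup (f := Finset.card) (mem_filter.mpr ⟨mem_powerset.mpr (subset_univ S), hS⟩)

theorem IsStableCert.eval_indicator [DecidableRel G.Adj] {r : ℕ} {A : MvPolynomial (Fin n) ℂ}
    {Q : Fin n → MvPolynomial (Fin n) ℂ} {Qe : Fin n × Fin n → MvPolynomial (Fin n) ℂ}
    (hcert : IsStableCert G r A Q Qe) {W : Finset (Fin n)} (hW : IsStableSet G W) :
    eval ((W : Set (Fin n)).indicator 1) A = ((#W : ℂ) - (stabilityNumber G + r : ℕ))⁻¹ := by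
  set x := (W : Set (Fin n)).indicator (1 : Fin n → ℂ)
  have hsum : ∑ i, x i = #W := by simp [x, Set.indicator_apply]
  have hidem : ∀ i, x i ^ 2 - x i = 0 := fun i => by
    by_cases hi : i ∈ W <;> simp [x, hi]
  have hedge : ∀ p ∈ edgePairs G, x p.1 * x p.2 = 0 := fun p hp => by
    have hadj := (mem_filter.mp hp).2.2
    by_cases h₁ : p.1 ∈ W
    · simp [x, Set.indicator_of_notMem (mt mem_coe.mp fun h₂ => hW _ h₁ _ h₂ hadj)]
    · simp [x, h₁]
  have h := congrArg (eval x) hcert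
  simp only [map_one, map_add, map_mul, map_sub, map_sum, map_pow, eval_X, eval_C, hsum, hidem,
    mul_zero, sum_const_zero, add_zero] at h
  rw [sum_eq_zero fun p hp => by rw [hedge p hp, mul_zero], add_zero] at h
  exact eq_inv_of_mul_eq_one_left h.symm

end StableSets

theorem monomial_extension_in_reduced_certificate_general (n : ℕ) (G : SimpleGraph (Fin n))
    [DecidableRel G.Adj] (r : ℕ) (hr : 1 ≤ r)
    (A : MvPolynomial (Fin n) ℂ) (Q : Fin n → MvPolynomial (Fin n) ℂ)
    (Qe : Fin n × Fin n → MvPolynomial (Fin n) ℂ)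
    (hcert : IsStableCert G r A Q Qe) (hred : IsReducedCoeff G A)
    (M : Finset (Fin n)) (hM : IsStableSet G M)
    (T : Finset (Fin n)) (hTM : T ⊆ M) (v : Fin n) (hvM : v ∈ M) :
    MvPolynomial.coeff (expOf (insert v T)) A ≠ 0 := by
  set U := insert v T
  have hU : IsStableSet G U := hM.mono (insert_subset hvM hTM)
  have hval : ∀ W ∈ U.powerset,
      (-1 : ℂ) ^ #(U \ W) * eval ((W : Set (Fin n)).indicator 1) A =
        (-1 : ℤ) ^ #(U \ W) • (fun y : ℂ => y⁻¹) (-(stabilityNumber G + r : ℕ) + #W • 1) :=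
    fun W hW => by
      rw [hcert.eval_indicator (hU.mono (mem_powerset.mp hW)), zsmul_eq_mul, nsmul_one,
        neg_add_eq_sub]
      push_cast
      rfl
  rw [coeff_expOf_eq_sum_powerset_eval_indicator (fun m hm => (hred m hm).1), sum_congr rfl hval,
    ← fwdDiff_iter_eq_sum_powerset]
  refine fwdDiff_iter_inv_ne_zero _ _ fun j hj => ?_
  have hj' : j ≠ stabilityNumber G + r := by have := hU.card_le_stabilityNumber; omega
  rw [neg_add_eq_sub, sub_ne_zero]
  exact_mod_cast hj'

/-- In a reduced Nullstellensatz certificate for the non-existence of a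
stable set of size `α(G) + r`: if `M` is a maximal stable set, `T ⊆ M`, and `v ∈ M \ T`,
and the square-free monomial `∏_{u ∈ T} x_u` appears in `A` with non-zero coefficient,
then `∏_{u ∈ T ∪ {v}} x_u` also appears in `A` with non-zero coefficient. -/
theorem monomial_extension_in_reduced_certificate (n : ℕ) (G : SimpleGraph (Fin n))
    [DecidableRel G.Adj] (r : ℕ) (hr : 1 ≤ r)
    (A : MvPolynomial (Fin n) ℂ) (Q : Fin n → MvPolynomial (Fin n) ℂ)
    (Qe : Fin n × Fin n → MvPolynomial (Fin n) ℂ)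
    (hcert : IsStableCert G r A Q Qe) (hred : IsReducedCoeff G A)
    (M : Finset (Fin n)) (hM : IsStableSet G M)
    (hmax : ∀ S : Finset (Fin n), IsStableSet G S → M ⊆ S → S = M)
    (T : Finset (Fin n)) (hTM : T ⊆ M) (v : Fin n) (hvM : v ∈ M) (hvT : v ∉ T)
    (hT : MvPolynomial.coeff (expOf T) A ≠ 0) :
    MvPolynomial.coeff (expOf (insert v T)) A ≠ 0 :=
  monomial_extension_in_reduced_certificate_general n G r hr A Q Qe hcert hred M hM T hTM v hvM
end

section
/- Let G be a finite simple graph with vertex set V = {1,…,n}, edge set E, and stability number α(G), and let r ≥ 1. Then every Nullstellensatz certificate 1 = A·(−(α(G)+r) + Σ_{i=1}^n x_i) + Σ_{i∈V} Q_i·(x_i² − x_i) + Σ_{{i,j}∈E} Q_{ij}·x_i·x_j for the non-existence of a stable set of size α(G)+r has degree at least α(G), i.e., max{deg A, deg Q_i, deg Q_{ij}} ≥ α(G). -/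
open Finset MvPolynomial

/-!
Evaluate the certificate at the 0/1 indicator vector `χ_S` of a subset `S` of a maximum stable
set `T`: the terms carrying `Q_i` and `Q_{ij}` vanish, so `A(χ_S) = 1 / (|S| - α(G) - r)`.
If `deg A < α(G) = |T|`, every monomial of `A` misses a vertex of `T`, hence the alternating sum
`∑_{S ⊆ T} (-1)^|S| A(χ_S)` vanishes. On the other hand, with `c = α(G) + r`,
`∑_{S ⊆ T} (-1)^|S| / (|S| - c) = ∑_k (-1)^k (α choose k) / (k - c) = α! / ∏_{j ≤ α} (j - c) ≠ 0`.
-/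

theorem Finset.prod_range_natCast_sub_ne_zero {R : Type*} [CommRing R] [NoZeroDivisors R]
    [Nontrivial R] {m : ℕ} {x : R} (hx : ∀ j ≤ m, (j : R) ≠ x) :
    ∏ j ∈ range (m + 1), ((j : R) - x) ≠ 0 :=
  prod_ne_zero_iff.2 fun j hj => sub_ne_zero.2 (hx j (Nat.lt_succ_iff.1 (mem_range.1 hj)))

theorem Finset.sum_range_neg_one_pow_mul_choose_div_sub {K : Type*} [Field K] (m : ℕ) (x : K)
    (hx : ∀ j ≤ m, (j : K) ≠ x) :
    ∑ k ∈ range (m + 1), (-1) ^ k * m.choose k / (k - x) =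
      m.factorial / ∏ j ∈ range (m + 1), ((j : K) - x) := by
  induction m generalizing x with
  | zero => simp
  | succ m ih =>
    have hx₀ : ∀ j ≤ m, (j : K) ≠ x := fun j hj => hx j (by omega)
    have hx₁ : ∀ j ≤ m, (j : K) ≠ x - 1 := fun j hj h =>
      hx (j + 1) (by omega) (by push_cast; linear_combination h)
    have pascal : ∑ k ∈ range (m + 2), (-1 : K) ^ k * (m + 1).choose k / (k - x) =
        ∑ k ∈ range (m + 1), (-1 : K) ^ k * m.choose k / (k - x) -
          ∑ k ∈ range (m + 1), (-1 : K) ^ k * m.choose k / (k - (x - 1)) := by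
      have := sum_choose_succ_mul (fun k _ => (-1 : K) ^ k / (k - x)) m
      simp only [mul_div_assoc, mul_comm ((-1 : K) ^ _)] at this ⊢
      rw [this, sub_eq_add_neg, ← sum_neg_distrib]
      congr 1
      refine sum_congr rfl fun k _ => ?_
      push_cast
      ring
    have hlast := prod_range_succ (fun j => (j : K) - x) (m + 1)
    have hfirst : ∏ j ∈ range (m + 2), ((j : K) - x) =
        -x * ∏ j ∈ range (m + 1), ((j : K) - (x - 1)) := by
      rw [prod_range_succ', mul_comm]
      push_cast
      rw [zero_sub]
      congr 1
      exact prod_congr rfl fun j _ => by ring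
    have hP₀ := prod_range_natCast_sub_ne_zero hx₀
    have hP₁ := prod_range_natCast_sub_ne_zero hx₁
    have hlast_ne : ∏ j ∈ range (m + 2), ((j : K) - x) ≠ 0 := prod_range_natCast_sub_ne_zero hx
    rw [pascal, ih x hx₀, ih (x - 1) hx₁, div_sub_div _ _ hP₀ hP₁,
      div_eq_div_iff (mul_ne_zero hP₀ hP₁) hlast_ne, hlast, Nat.factorial_succ]
    push_cast at hlast ⊢
    linear_combination (-(m.factorial : K) * ∏ j ∈ range (m + 1), ((j : K) - x)) *
      hlast.symm.trans hfirst

theorem Finset.sum_powerset_neg_one_pow_card_div_card_sub_ne_zero {α K : Type*} [Field K]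
    [CharZero K] (T : Finset α) {x : K} (hx : ∀ j ≤ #T, (j : K) ≠ x) :
    ∑ S ∈ T.powerset, (-1) ^ #S / (#S - x) ≠ 0 := by
  have hterm : ∀ k, (#T).choose k • ((-1 : K) ^ k / (k - x)) =
      (-1) ^ k * (#T).choose k / (k - x) := fun k => by rw [nsmul_eq_mul]; ring
  rw [sum_powerset_apply_card fun k => (-1 : K) ^ k / (k - x)]
  simp only [hterm]
  rw [sum_range_neg_one_pow_mul_choose_div_sub _ x hx]
  exact div_ne_zero (Nat.cast_ne_zero.2 (Nat.factorial_ne_zero _))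
    (prod_range_natCast_sub_ne_zero hx)

theorem Finset.sum_powerset_neg_one_pow_card_mul_eq_zero {α R : Type*} [DecidableEq α]
    [CommRing R] {T : Finset α} {i : α} (hi : i ∈ T) {f : Finset α → R}
    (hf : ∀ S ⊆ T.erase i, f (insert i S) = f S) :
    ∑ S ∈ T.powerset, (-1) ^ #S * f S = 0 := by
  rw [← insert_erase hi, sum_powerset_insert (notMem_erase i T), ← sum_add_distrib]
  refine sum_eq_zero fun S hS => ?_
  have hiS : i ∉ S := fun h => notMem_erase i T (mem_powerset.1 hS h)
  rw [card_insert_of_notMem hiS, hf S (mem_powerset.1 hS), pow_succ]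
  ring

theorem Finsupp.card_support_le_sum {σ : Type*} (d : σ →₀ ℕ) :
    #d.support ≤ d.sum fun _ e => e := by
  simpa [Finsupp.sum] using
    card_nsmul_le_sum d.support d 1 fun i hi => Nat.one_le_iff_ne_zero.2 (d.mem_support_iff.1 hi)

theorem MvPolynomial.eval_monomial_indicator_insert {σ R : Type*} [DecidableEq σ] [CommRing R]
    {d : σ →₀ ℕ} {i : σ} (hi : i ∉ d.support) (a : R) (S : Finset σ) :
    eval (fun j => if j ∈ insert i S then 1 else 0) (monomial d a) =
      eval (fun j => if j ∈ S then (1 : R) else 0) (monomial d a) := by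
  simp only [eval_monomial]
  congr 1
  refine Finsupp.prod_congr fun j hj => ?_
  simp [ne_of_mem_of_not_mem hj hi]

theorem MvPolynomial.sum_powerset_neg_one_pow_card_mul_eval_eq_zero {σ R : Type*}
    [DecidableEq σ] [CommRing R] (p : MvPolynomial σ R) {T : Finset σ}
    (hp : p.totalDegree < #T) :
    ∑ S ∈ T.powerset, (-1) ^ #S * eval (fun j => if j ∈ S then 1 else 0) p = 0 := by
  conv_lhs => rw [p.as_sum]
  simp only [map_sum, mul_sum]
  rw [sum_comm]
  refine sum_eq_zero fun d hd => ?_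
  obtain ⟨i, hiT, hid⟩ : ∃ i ∈ T, i ∉ d.support := by
    by_contra! h
    exact (((card_le_card h).trans d.card_support_le_sum).trans (le_totalDegree hd)).not_gt hp
  exact sum_powerset_neg_one_pow_card_mul_eq_zero hiT fun S _ =>
    eval_monomial_indicator_insert hid _ S

theorem exists_isStableSet_card_eq_stabilityNumber {n : ℕ} (G : SimpleGraph (Fin n))
    [DecidableRel G.Adj] : ∃ T, IsStableSet G T ∧ #T = stabilityNumber G := by
  obtain ⟨T, hT, hcard⟩ := exists_mem_eq_sup
    (univ.powerset.filter fun S => ∀ i ∈ S, ∀ j ∈ S, ¬ G.Adj i j) ⟨∅, by simp⟩ card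
  exact ⟨T, (mem_filter.1 hT).2, hcard.symm⟩

theorem IsStableCert.eval_indicator_mul {n : ℕ} {G : SimpleGraph (Fin n)} [DecidableRel G.Adj]
    {r : ℕ} {A : MvPolynomial (Fin n) ℂ} {Q : Fin n → MvPolynomial (Fin n) ℂ}
    {Qe : Fin n × Fin n → MvPolynomial (Fin n) ℂ} (hcert : IsStableCert G r A Q Qe)
    {S : Finset (Fin n)} (hS : IsStableSet G S) :
    eval (fun i => if i ∈ S then 1 else 0) A * ((#S : ℂ) - (stabilityNumber G + r : ℕ)) = 1 := by
  have h := congrArg (eval fun i => if i ∈ S then (1 : ℂ) else 0) hcert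
  have hvertex : ∀ i, (if i ∈ S then (1 : ℂ) else 0) ^ 2 - (if i ∈ S then 1 else 0) = 0 := by
    intro i
    split_ifs <;> norm_num
  have hedge : ∀ p ∈ edgePairs G,
      (if p.1 ∈ S then (1 : ℂ) else 0) * (if p.2 ∈ S then 1 else 0) = 0 := by
    intro p hp
    have hadj := (mem_filter.1 hp).2.2
    by_cases h₁ : p.1 ∈ S
    · have h₂ : p.2 ∉ S := fun h₂ => hS _ h₁ _ h₂ hadj
      simp [h₂]
    · simp [h₁]
  simp only [map_one, map_add, map_mul, map_sub, map_sum, map_pow, eval_C, eval_X, hvertex,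
    mul_zero, sum_const_zero, add_zero, sum_boole, filter_univ_mem] at h
  rw [sum_eq_zero fun p hp => by rw [hedge p hp, mul_zero], add_zero] at h
  exact h.symm

/-- Every Nullstellensatz certificate for the non-existence of a stable
set of size `α(G) + r` (with `r ≥ 1`) has degree at least `α(G)`. -/
theorem stable_certificate_degree_lower_bound (n : ℕ) (G : SimpleGraph (Fin n))
    [DecidableRel G.Adj] (r : ℕ) (hr : 1 ≤ r)
    (A : MvPolynomial (Fin n) ℂ) (Q : Fin n → MvPolynomial (Fin n) ℂ)
    (Qe : Fin n × Fin n → MvPolynomial (Fin n) ℂ)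
    (hcert : IsStableCert G r A Q Qe) :
    stabilityNumber G ≤ stableCertDeg G A Q Qe := by
  obtain ⟨T, hT, hTcard⟩ := exists_isStableSet_card_eq_stabilityNumber G
  by_contra! hlt
  have hdeg : A.totalDegree < #T := hTcard ▸ (le_max_left _ _).trans_lt hlt
  have hsize : ∀ j ≤ #T, (j : ℂ) ≠ (stabilityNumber G + r : ℕ) := fun j hj =>
    Nat.cast_injective.ne (by omega)
  apply sum_powerset_neg_one_pow_card_div_card_sub_ne_zero T hsize
  rw [← A.sum_powerset_neg_one_pow_card_mul_eval_eq_zero hdeg]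
  refine sum_congr rfl fun S hS => ?_
  have hSstable : IsStableSet G S := fun i hi j hj =>
    hT i (mem_powerset.1 hS hi) j (mem_powerset.1 hS hj)
  rw [div_eq_mul_inv, eq_inv_of_mul_eq_one_left (hcert.eval_indicator_mul hSstable)]
end

section
/- Let G be a finite simple graph with vertex set V = {1,…,n} and edge set E. Then every Nullstellensatz certificate for non-3-colorability of G, i.e., every family of polynomials (P_i)_{i∈V}, (P_{ij})_{{i,j}∈E} in ℂ[x_1,…,x_n] satisfying the identity 1 = Σ_{i∈V} P_i·(x_i³ − 1) + Σ_{{i,j}∈E} P_{ij}·(x_i² + x_i·x_j + x_j²), has degree at least four: max over all i and {i,j} of the total degrees of P_i and P_{ij} is ≥ 4. -/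
open Finset MvPolynomial

/-- A Nullstellensatz certificate for non-3-colorability of `G`: polynomials
`(P_i)_{i∈V}` and `(P_{ij})_{{i,j}∈E}` with
`1 = Σ_i P_i (x_i³ − 1) + Σ_{{i,j}∈E} P_{ij} (x_i² + x_i x_j + x_j²)`. -/
def IsColorCert {n : ℕ} (G : SimpleGraph (Fin n)) [DecidableRel G.Adj]
    (P : Fin n → MvPolynomial (Fin n) ℂ)
    (Pe : Fin n × Fin n → MvPolynomial (Fin n) ℂ) : Prop :=
  (1 : MvPolynomial (Fin n) ℂ) =
    (∑ i : Fin n, P i * (X i ^ 3 - 1)) +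
    ∑ p ∈ edgePairs G, Pe p * (X p.1 ^ 2 + X p.1 * X p.2 + X p.2 ^ 2)

/-- The degree of a non-3-colorability certificate: the maximum of the total degrees of
the coefficient polynomials. -/
def colorCertDeg {n : ℕ} (G : SimpleGraph (Fin n)) [DecidableRel G.Adj]
    (P : Fin n → MvPolynomial (Fin n) ℂ)
    (Pe : Fin n × Fin n → MvPolynomial (Fin n) ℂ) : ℕ :=
  max (Finset.univ.sup fun i => (P i).totalDegree)
    ((edgePairs G).sup fun p => (Pe p).totalDegree)

/-!
The proof exhibits a dual witness: a linear functional `L` on `R[x]` with `L 1 = 2` that kills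
every `p * (x_i³ - 1)` and every `Q * (x_i² + x_i x_j + x_j²)` with `deg Q ≤ 3`; applied to a
certificate of degree at most three it gives `2 = 0`. The value of `L` on `x^μ` depends only on
how many exponents of `μ` are `≡ 1` and how many are `≡ 2 (mod 3)`, so `L` kills the vertex
relations. On the edge relations the three monomials of `x^μ (x_i² + x_i x_j + x_j²)` have
weights summing to zero: since `deg μ ≤ 3` only finitely many residue patterns occur, and
they are checked one by one.
-/

namespace ColorCert

variable {σ R : Type*} [Fintype σ] [CommRing R]

def residueIndicator (r a : ZMod 3) : ℕ := if a = r then 1 else 0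

def residueCount (r : ZMod 3) (μ : σ →₀ ℕ) : ℕ := ∑ k, residueIndicator r (μ k)

/-- With exponents read mod 3, the nonzero weights are `L 1 = 2`, `L (x_a x_b²) = -1` and
`L (x_a x_b x_c) = 2` for distinct `a, b, c`. -/
def pairWeight : ℕ → ℕ → ℤ
  | 0, 0 => 2
  | 1, 1 => -1
  | 3, 0 => 2
  | _, _ => 0

def monomialWeight (μ : σ →₀ ℕ) : ℤ := pairWeight (residueCount 1 μ) (residueCount 2 μ)

noncomputable def residueFunctional : MvPolynomial σ R →ₗ[R] R :=
  (basisMonomials σ R).constr R fun μ => (monomialWeight μ : R)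

lemma residueFunctional_monomial (μ : σ →₀ ℕ) (c : R) :
    residueFunctional (monomial μ c) = c * monomialWeight μ := by
  rw [show monomial μ c = c • monomial μ 1 by rw [smul_monomial, smul_eq_mul, mul_one],
    map_smul, smul_eq_mul]
  exact congrArg (c * ·) ((basisMonomials σ R).constr_basis R _ μ)

lemma residueFunctional_one : residueFunctional (1 : MvPolynomial σ R) = 2 := by
  rw [← C_1, ← monomial_zero', residueFunctional_monomial]
  simp [monomialWeight, residueCount, residueIndicator, pairWeight,
    show (0 : ZMod 3) ≠ 2 by decide]

lemma monomialWeight_congr {μ ν : σ →₀ ℕ} (h : ∀ k, (μ k : ZMod 3) = ν k) :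
    monomialWeight μ = monomialWeight ν := by
  simp only [monomialWeight, residueCount, h]

lemma monomialWeight_add_single_three (μ : σ →₀ ℕ) (i : σ) :
    monomialWeight (μ + Finsupp.single i 3) = monomialWeight μ := by
  classical
  refine monomialWeight_congr fun k => ?_
  rw [Finsupp.add_apply, Finsupp.single_apply]
  split_ifs <;> simp [show (3 : ZMod 3) = 0 from rfl]

lemma residueFunctional_mul_X_pow_three_sub_one (p : MvPolynomial σ R) (i : σ) :
    residueFunctional (p * (X i ^ 3 - 1)) = 0 := by
  induction p using MvPolynomial.induction_on' with
  | monomial μ c =>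
    rw [mul_sub, mul_one, X_pow_eq_monomial, monomial_mul, mul_one, map_sub,
      residueFunctional_monomial, residueFunctional_monomial,
      monomialWeight_add_single_three, sub_self]
  | add p q hp hq => rw [add_mul, map_add, hp, hq, add_zero]

lemma residueIndicator_one_add_two_mul_le (s : ℕ) :
    residueIndicator 1 (s : ZMod 3) + 2 * residueIndicator 2 (s : ZMod 3) ≤ s := by
  rw [← ZMod.natCast_mod s 3]
  refine le_trans ?_ (Nat.mod_le s 3)
  have := Nat.mod_lt s three_pos
  interval_cases s % 3 <;> decide

lemma residueCount_one_add_two_mul_le (μ : σ →₀ ℕ) :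
    residueCount 1 μ + 2 * residueCount 2 μ ≤ ∑ k, μ k := by
  rw [residueCount, residueCount, mul_sum, ← sum_add_distrib]
  exact sum_le_sum fun k _ => residueIndicator_one_add_two_mul_le (μ k)

def localWeight (a b : ZMod 3) (u v : ℕ) : ℤ :=
  pairWeight (residueIndicator 1 a + residueIndicator 1 b + u)
    (residueIndicator 2 a + residueIndicator 2 b + v)

lemma localWeight_edge_sum (a b : ZMod 3) (u v : ℕ)
    (hdeg : residueIndicator 1 a + residueIndicator 1 b + u
      + 2 * (residueIndicator 2 a + residueIndicator 2 b + v) ≤ 3) :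
    localWeight (a + 2) b u v + localWeight (a + 1) (b + 1) u v
      + localWeight a (b + 2) u v = 0 := by
  have hu : u ≤ 3 := by omega
  have hv : v ≤ 1 := by omega
  interval_cases u <;> interval_cases v <;> revert a b <;> decide

section Edge

variable [DecidableEq σ] {i j : σ}

lemma residueCount_eq_add_sum_compl (hij : i ≠ j) (r : ZMod 3) {μ ν : σ →₀ ℕ}
    (h : ∀ k ∉ ({i, j} : Finset σ), ν k = μ k) :
    residueCount r ν = residueIndicator r (ν i) + residueIndicator r (ν j)
      + ∑ k ∈ {i, j}ᶜ, residueIndicator r (μ k) := by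
  rw [residueCount, ← sum_add_sum_compl {i, j}, sum_pair hij]
  exact congrArg _ (sum_congr rfl fun k hk => by rw [h k (mem_compl.1 hk)])

lemma monomialWeight_eq_localWeight (hij : i ≠ j) {μ ν : σ →₀ ℕ}
    (h : ∀ k ∉ ({i, j} : Finset σ), ν k = μ k) :
    monomialWeight ν = localWeight (ν i) (ν j)
      (∑ k ∈ {i, j}ᶜ, residueIndicator 1 (μ k))
      (∑ k ∈ {i, j}ᶜ, residueIndicator 2 (μ k)) := by
  rw [monomialWeight, residueCount_eq_add_sum_compl hij 1 h,
    residueCount_eq_add_sum_compl hij 2 h, localWeight]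

lemma monomialWeight_edge_sum (hij : i ≠ j) {μ : σ →₀ ℕ} (hμ : ∑ k, μ k ≤ 3) :
    monomialWeight (μ + Finsupp.single i 2)
      + monomialWeight (μ + (Finsupp.single i 1 + Finsupp.single j 1))
      + monomialWeight (μ + Finsupp.single j 2) = 0 := by
  have hdeg := residueCount_one_add_two_mul_le μ
  rw [residueCount_eq_add_sum_compl hij 1 (ν := μ) fun _ _ => rfl,
    residueCount_eq_add_sum_compl hij 2 (ν := μ) fun _ _ => rfl] at hdeg
  rw [monomialWeight_eq_localWeight hij (μ := μ) fun k hk => ?_,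
    monomialWeight_eq_localWeight hij (μ := μ) fun k hk => ?_,
    monomialWeight_eq_localWeight hij (μ := μ) fun k hk => ?_]
  · simp only [Finsupp.add_apply, Finsupp.single_apply, hij, hij.symm, if_false, Nat.cast_add,
      add_zero]
    exact localWeight_edge_sum _ _ _ _ (by omega)
  all_goals
    simp only [mem_insert, mem_singleton, not_or] at hk
    simp [Ne.symm hk.1, Ne.symm hk.2]

lemma residueFunctional_mul_edge (Q : MvPolynomial σ R) (hij : i ≠ j)
    (hQ : Q.totalDegree ≤ 3) :
    residueFunctional (Q * (X i ^ 2 + X i * X j + X j ^ 2)) = 0 := by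
  rw [Q.as_sum, sum_mul, map_sum]
  refine sum_eq_zero fun μ hμ => ?_
  have hdeg : ∑ k, μ k ≤ 3 := by
    rw [← Finsupp.sum_fintype μ (fun _ e => e) fun _ => rfl]
    exact (le_totalDegree hμ).trans hQ
  rw [X_pow_eq_monomial, X_pow_eq_monomial]
  simp only [mul_add, X, monomial_mul, mul_one, map_add, residueFunctional_monomial]
  rw [← mul_add, ← mul_add, ← Int.cast_add, ← Int.cast_add,
    monomialWeight_edge_sum hij hdeg, Int.cast_zero, mul_zero]

end Edge

end ColorCert

open ColorCert

/-- Every Nullstellensatz certificate for non-3-colorability of a graph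
has degree at least four. -/
theorem color_certificate_degree_at_least_four (n : ℕ) (G : SimpleGraph (Fin n))
    [DecidableRel G.Adj]
    (P : Fin n → MvPolynomial (Fin n) ℂ)
    (Pe : Fin n × Fin n → MvPolynomial (Fin n) ℂ)
    (hcert : IsColorCert G P Pe) :
    4 ≤ colorCertDeg G P Pe := by
  by_contra! hlt
  have hPe : ∀ p ∈ edgePairs G, (Pe p).totalDegree ≤ 3 := fun p hp =>
    (le_sup (f := fun p => (Pe p).totalDegree) hp).trans
      ((le_max_right _ _).trans (Nat.lt_succ_iff.1 hlt))
  have h := congrArg residueFunctional hcert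
  rw [residueFunctional_one, map_add, map_sum, map_sum,
    sum_eq_zero fun i _ => residueFunctional_mul_X_pow_three_sub_one (P i) i,
    sum_eq_zero fun p hp => residueFunctional_mul_edge (Pe p) (mem_filter.1 hp).2.1.ne (hPe p hp),
    add_zero] at h
  norm_num at h
end
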